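/- arXiv:2110.07397 — 7 statements merged into one kernel-verified Lean document; each statement's English description precedes it below -/
import Mathlib

section
/- Let R be a polynomial ring over ℂ in finitely or countably many variables, let A ⊂ R be a subalgebra homogeneous with respect to an ℕ₀^l-grading grad on R (all variables grad-homogeneous) with finite-dimensional graded components. Then for any monomial order < on R, the subalgebras A and in_<(A) have the same multivariate Hilbert series with respect to grad, i.e. for every multidegree d ∈ ℕ₀^l the graded components A_d and (in_<(A))_d have equal dimension. -/
open scoped Classical

noncomputable section

open MvPolynomial

/-- The initial (leading) term of `f` with respect to the strict monomial order `lt`: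
the term of `f` whose monomial is `lt`-maximal in the support (or `0` if none exists). -/
def initTerm {σ : Type*} (lt : (σ →₀ ℕ) → (σ →₀ ℕ) → Prop)
    (f : MvPolynomial σ ℂ) : MvPolynomial σ ℂ :=
  if h : ∃ m, m ∈ f.support ∧ ∀ m' ∈ f.support, m' ≠ m → lt m' m
  then monomial h.choose (coeff h.choose f)
  else 0

/-- The initial subalgebra of `A` (as a ℂ-submodule): the span of the
initial terms of elements of `A`. -/
def initSpan {σ : Type*} (lt : (σ →₀ ℕ) → (σ →₀ ℕ) → Prop)
    (A : Subalgebra ℂ (MvPolynomial σ ℂ)) : Submodule ℂ (MvPolynomial σ ℂ) :=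
  Submodule.span ℂ (initTerm lt '' (A : Set (MvPolynomial σ ℂ)))

/-- The degree reverse lexicographic order on monomials, where the variables are
enumerated according to `rank`: `a < b` iff `deg a < deg b`, or the degrees agree and
at the last (highest-rank) variable where `a` and `b` differ, `a` has the larger exponent. -/
def degRevLex {σ : Type*} (rank : σ → ℕ) (a b : σ →₀ ℕ) : Prop :=
  (a.sum fun _ e => e) < (b.sum fun _ e => e) ∨
    ((a.sum fun _ e => e) = (b.sum fun _ e => e) ∧
      ∃ i, b i < a i ∧ ∀ j, rank i < rank j → a j = b j)
/-- The `grad`-weight of a monomial, where `grad` assigns to each variable a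
multidegree in `ℕ^l`. -/
def gradWt {σ : Type*} {l : ℕ} (grad : σ → (Fin l →₀ ℕ)) (m : σ →₀ ℕ) : Fin l →₀ ℕ :=
  m.sum fun i e => e • grad i

/-- The `grad`-homogeneous component of multidegree `d` of a polynomial. -/
def gradComp {σ : Type*} {l : ℕ} (grad : σ → (Fin l →₀ ℕ)) (d : Fin l →₀ ℕ)
    (f : MvPolynomial σ ℂ) : MvPolynomial σ ℂ :=
  ∑ m ∈ f.support, if gradWt grad m = d then monomial m (coeff m f) else 0

/-- The submodule of `grad`-homogeneous polynomials of multidegree `d`. -/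
def homogSub {σ : Type*} {l : ℕ} (grad : σ → (Fin l →₀ ℕ)) (d : Fin l →₀ ℕ) :
    Submodule ℂ (MvPolynomial σ ℂ) where
  carrier := {f | ∀ m ∈ f.support, gradWt grad m = d}
  add_mem' := by
    intro a b ha hb m hm
    rcases Finset.mem_union.mp (MvPolynomial.support_add hm) with h | h
    · exact ha m h
    · exact hb m h
  zero_mem' := by
    intro m hm
    simp at hm
  smul_mem' := by
    intro c f hf m hm
    exact hf m (MvPolynomial.support_smul hm)

/-!
The dimension of any space `V` of polynomials equals the number of leading monomials of its
elements: one element of `V` for each leading monomial gives a linearly independent family,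
and an element of `V` whose coefficients vanish at all leading monomials is zero, since its own
leading coefficient does not vanish. The initial space of `A` is spanned by the leading monomials
of `A`, and because `A` contains the graded components of its elements, the leading monomials of
`A` of multidegree `d` are exactly those of `A_d`. So both sides have dimension the number of
leading monomials of `A` of multidegree `d`.
-/

theorem Finset.exists_forall_ne_rel {α : Type*} (r : α → α → Prop) [IsStrictTotalOrder α r]
    {s : Finset α} (hs : s.Nonempty) : ∃ a ∈ s, ∀ b ∈ s, b ≠ a → r b a := by
  let := linearOrderOfSTO r
  exact ⟨s.max' hs, s.max'_mem hs, fun b hb hne => lt_of_le_of_ne (s.le_max' b hb) hne⟩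

section LeadingMonomial

variable {σ R K : Type*} [CommSemiring R] [Field K] (lt : (σ →₀ ℕ) → (σ →₀ ℕ) → Prop)

def IsLeadingMonomial (f : MvPolynomial σ R) (m : σ →₀ ℕ) : Prop :=
  m ∈ f.support ∧ ∀ m' ∈ f.support, m' ≠ m → lt m' m

def leadingMonomials (V : Submodule R (MvPolynomial σ R)) : Set (σ →₀ ℕ) :=
  {m | ∃ f ∈ V, IsLeadingMonomial lt f m}

variable {lt} [IsStrictTotalOrder (σ →₀ ℕ) lt] {f : MvPolynomial σ R} {m : σ →₀ ℕ}

theorem exists_isLeadingMonomial (hf : f ≠ 0) : ∃ m, IsLeadingMonomial lt f m :=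
  Finset.exists_forall_ne_rel lt (support_nonempty.mpr hf)

theorem IsLeadingMonomial.unique {m' : σ →₀ ℕ} (h : IsLeadingMonomial lt f m)
    (h' : IsLeadingMonomial lt f m') : m = m' := by
  by_contra hne
  exact irrefl_of lt m (trans_of lt (h'.2 m h.1 hne) (h.2 m' h'.1 (Ne.symm hne)))

theorem IsLeadingMonomial.coeff_eq_zero_of_lt {m' : σ →₀ ℕ} (h : IsLeadingMonomial lt f m)
    (hlt : lt m m') : coeff m' f = 0 := by
  by_contra hne
  exact asymm_of lt hlt (h.2 m' (mem_support_iff.mpr hne) (ne_of_irrefl' hlt))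

theorem linearIndependent_of_isLeadingMonomial {ι : Type*} {F : ι → MvPolynomial σ K}
    {lead : ι → σ →₀ ℕ} (hlead : Function.Injective lead)
    (hF : ∀ i, IsLeadingMonomial lt (F i) (lead i)) : LinearIndependent K F := by
  rw [linearIndependent_iff']
  intro s g hsum i hi
  by_contra hgi
  have ht : (s.filter (g · ≠ 0)).Nonempty := ⟨i, Finset.mem_filter.mpr ⟨hi, hgi⟩⟩
  obtain ⟨_, hm, hmax⟩ := Finset.exists_forall_ne_rel lt (ht.image lead)
  obtain ⟨j, hjt, rfl⟩ := Finset.mem_image.mp hm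
  obtain ⟨hjs, hgj⟩ := Finset.mem_filter.mp hjt
  have hcoeff : coeff (lead j) (∑ k ∈ s, g k • F k) = g j * coeff (lead j) (F j) := by
    rw [coeff_sum, Finset.sum_eq_single_of_mem j hjs, coeff_smul, smul_eq_mul]
    intro k hks hkj
    rw [coeff_smul, smul_eq_mul]
    by_cases hgk : g k = 0
    · rw [hgk, zero_mul]
    · have hlt : lt (lead k) (lead j) :=
        hmax _ (Finset.mem_image_of_mem _ (Finset.mem_filter.mpr ⟨hks, hgk⟩))
          (hlead.ne hkj)
      rw [(hF k).coeff_eq_zero_of_lt hlt, mul_zero]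
  rw [hsum, coeff_zero] at hcoeff
  exact mul_ne_zero hgj (mem_support_iff.mp (hF j).1) hcoeff.symm

theorem rank_eq_rank_restrictSupport_leadingMonomials (V : Submodule K (MvPolynomial σ K)) :
    Module.rank K V = Module.rank K (restrictSupport K (leadingMonomials lt V)) := by
  set M := leadingMonomials lt V
  rw [(basisRestrictSupport K M).repr.rank_eq]
  apply le_antisymm
  · let restrict : V →ₗ[K] M →₀ K :=
      Finsupp.lsubtypeDomain M ∘ₗ (basisMonomials σ K).repr.toLinearMap ∘ₗ V.subtype
    refine LinearMap.rank_le_of_injective restrict <|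
      (injective_iff_map_eq_zero restrict).mpr fun f hf => Subtype.ext <| by_contra fun hf0 => ?_
    obtain ⟨m, hm⟩ := exists_isLeadingMonomial (lt := lt) hf0
    have hcoeff : coeff m (f : MvPolynomial σ K) = restrict f ⟨m, f, f.2, hm⟩ := rfl
    rw [hf, Finsupp.zero_apply] at hcoeff
    exact mem_support_iff.mp hm.1 hcoeff
  · choose F hFV hF using fun m : M => m.2
    have hli : LinearIndependent K fun m : M => (⟨F m, hFV m⟩ : V) :=
      .of_comp V.subtype (linearIndependent_of_isLeadingMonomial Subtype.val_injective hF)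
    exact LinearMap.rank_le_of_injective _ hli

end LeadingMonomial

section InitialSpan

variable {σ : Type*} {lt : (σ →₀ ℕ) → (σ →₀ ℕ) → Prop} [IsStrictTotalOrder (σ →₀ ℕ) lt]

theorem initTerm_eq_monomial {f : MvPolynomial σ ℂ} {m : σ →₀ ℕ}
    (h : IsLeadingMonomial lt f m) : initTerm lt f = monomial m (coeff m f) := by
  have hex : ∃ m, m ∈ f.support ∧ ∀ m' ∈ f.support, m' ≠ m → lt m' m := ⟨m, h⟩
  rw [initTerm, dif_pos hex, IsLeadingMonomial.unique hex.choose_spec h]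

theorem initSpan_eq_restrictSupport (A : Subalgebra ℂ (MvPolynomial σ ℂ)) :
    initSpan lt A = restrictSupport ℂ (leadingMonomials lt (Subalgebra.toSubmodule A)) := by
  apply le_antisymm
  · refine Submodule.span_le.mpr ?_
    rintro _ ⟨f, hfA, rfl⟩
    rcases eq_or_ne f 0 with rfl | hf0
    · simp [initTerm]
    · obtain ⟨m, hm⟩ := exists_isLeadingMonomial (lt := lt) hf0
      rw [SetLike.mem_coe, initTerm_eq_monomial hm, monomial_mem_restrictSupport]
      exact Or.inl ⟨f, hfA, hm⟩
  · rw [restrictSupport_eq_span, Submodule.span_le]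
    rintro _ ⟨m, ⟨f, hfA, hm⟩, rfl⟩
    show monomial m (1 : ℂ) ∈ initSpan lt A
    have hmonomial : monomial m (1 : ℂ) = (coeff m f)⁻¹ • initTerm lt f := by
      rw [initTerm_eq_monomial hm, smul_monomial, smul_eq_mul,
        inv_mul_cancel₀ (mem_support_iff.mp hm.1)]
    rw [hmonomial]
    exact Submodule.smul_mem _ _ (Submodule.subset_span ⟨f, hfA, rfl⟩)

end InitialSpan

theorem MvPolynomial.restrictSupport_inf {σ R : Type*} [CommSemiring R] (s t : Set (σ →₀ ℕ)) :
    restrictSupport R s ⊓ restrictSupport R t = restrictSupport R (s ∩ t) := by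
  ext f
  simp only [Submodule.mem_inf, mem_restrictSupport_iff, Set.subset_inter_iff]

section Grading

variable {σ : Type*} {l : ℕ} (grad : σ → (Fin l →₀ ℕ))

theorem homogSub_eq_restrictSupport (d : Fin l →₀ ℕ) :
    homogSub grad d = restrictSupport ℂ {m | gradWt grad m = d} :=
  rfl

theorem gradComp_eq_weightedHomogeneousComponent (d : Fin l →₀ ℕ) (f : MvPolynomial σ ℂ) :
    gradComp grad d f = weightedHomogeneousComponent grad d f := by
  rw [weightedHomogeneousComponent_apply, Finset.sum_filter]
  rfl

theorem coeff_gradComp (d : Fin l →₀ ℕ) (f : MvPolynomial σ ℂ) (m : σ →₀ ℕ) :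
    coeff m (gradComp grad d f) = if gradWt grad m = d then coeff m f else 0 := by
  rw [gradComp_eq_weightedHomogeneousComponent, coeff_weightedHomogeneousComponent]
  rfl

theorem mem_support_gradComp {d : Fin l →₀ ℕ} {f : MvPolynomial σ ℂ} {m : σ →₀ ℕ} :
    m ∈ (gradComp grad d f).support ↔ m ∈ f.support ∧ gradWt grad m = d := by
  rw [mem_support_iff, coeff_gradComp, mem_support_iff]
  split_ifs with hm <;> simp [hm]

theorem gradComp_mem_homogSub (d : Fin l →₀ ℕ) (f : MvPolynomial σ ℂ) :
    gradComp grad d f ∈ homogSub grad d :=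
  fun _ hm => (mem_support_gradComp grad).mp hm |>.2

variable {grad} {lt : (σ →₀ ℕ) → (σ →₀ ℕ) → Prop}

theorem IsLeadingMonomial.gradComp_gradWt {f : MvPolynomial σ ℂ} {m : σ →₀ ℕ}
    (h : IsLeadingMonomial lt f m) :
    IsLeadingMonomial lt (gradComp grad (gradWt grad m) f) m :=
  ⟨(mem_support_gradComp grad).mpr ⟨h.1, rfl⟩,
    fun m' hm' => h.2 m' ((mem_support_gradComp grad).mp hm').1⟩

theorem leadingMonomials_inf_homogSub {V : Submodule ℂ (MvPolynomial σ ℂ)}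
    (hV : ∀ f ∈ V, ∀ d, gradComp grad d f ∈ V) (d : Fin l →₀ ℕ) :
    leadingMonomials lt (V ⊓ homogSub grad d) =
      leadingMonomials lt V ∩ {m | gradWt grad m = d} := by
  ext m
  constructor
  · rintro ⟨f, ⟨hfV, hf⟩, hm⟩
    exact ⟨⟨f, hfV, hm⟩, hf m hm.1⟩
  · rintro ⟨⟨f, hfV, hm⟩, rfl⟩
    exact ⟨_, ⟨hV f hfV _, gradComp_mem_homogSub grad _ f⟩, hm.gradComp_gradWt⟩

end Grading

theorem statement1_general {σ : Type*} {l : ℕ}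
    (lt : (σ →₀ ℕ) → (σ →₀ ℕ) → Prop)
    (hIrr : ∀ a, ¬ lt a a)
    (hTrans : ∀ a b c, lt a b → lt b c → lt a c)
    (hTotal : ∀ a b, a = b ∨ lt a b ∨ lt b a)
    (grad : σ → (Fin l →₀ ℕ))
    (A : Subalgebra ℂ (MvPolynomial σ ℂ))
    (hAhomog : ∀ f ∈ A, ∀ d, gradComp grad d f ∈ A) :
    ∀ d : Fin l →₀ ℕ,
      Module.rank ℂ ↥(Subalgebra.toSubmodule A ⊓ homogSub grad d) =
        Module.rank ℂ ↥(initSpan lt A ⊓ homogSub grad d) := by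
  have : IsStrictTotalOrder (σ →₀ ℕ) lt :=
    { trichotomous a b hab hba := (hTotal a b).resolve_right (not_or_intro hab hba)
      irrefl := hIrr
      trans := hTrans }
  intro d
  rw [rank_eq_rank_restrictSupport_leadingMonomials (lt := lt),
    leadingMonomials_inf_homogSub hAhomog, initSpan_eq_restrictSupport,
    homogSub_eq_restrictSupport, restrictSupport_inf]

/-- For a graded subalgebra `A` with finite-dimensional graded
components and any monomial order, `A` and its initial subalgebra have the same
multivariate Hilbert series, i.e. graded components of equal multidegree have
equal dimension. -/
theorem statement1 {σ : Type*} [Countable σ] {l : ℕ}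
    (lt : (σ →₀ ℕ) → (σ →₀ ℕ) → Prop)
    (hIrr : ∀ a, ¬ lt a a)
    (hTrans : ∀ a b c, lt a b → lt b c → lt a c)
    (hTotal : ∀ a b, a = b ∨ lt a b ∨ lt b a)
    (hCompat : ∀ a b (i : σ), lt a b →
      lt (a + Finsupp.single i 1) (b + Finsupp.single i 1))
    (grad : σ → (Fin l →₀ ℕ))
    (A : Subalgebra ℂ (MvPolynomial σ ℂ))
    (hAhomog : ∀ f ∈ A, ∀ d, gradComp grad d f ∈ A)
    (hAfin : ∀ d, Module.Finite ℂ ↥(Subalgebra.toSubmodule A ⊓ homogSub grad d)) :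
    ∀ d : Fin l →₀ ℕ,
      Module.rank ℂ ↥(Subalgebra.toSubmodule A ⊓ homogSub grad d) =
        Module.rank ℂ ↥(initSpan lt A ⊓ homogSub grad d) :=
  statement1_general lt hIrr hTrans hTotal grad A hAhomog
end
end

section
/- Let R = ℂ[x₁, x₂, …] and let < be the degree reverse lexicographic monomial order with respect to the enumeration x₁, x₂, … of the variables. Suppose the subalgebra A ⊂ R is homogeneous with respect to total degree and has a sagbi basis {s₁, s₂, …} with respect to < such that every s_j has total degree at most a fixed integer M. Then there exists a sequence λ = (λ₁, λ₂, …) of real numbers (one for each variable) such that in_λ(A) = in_<(A). -/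
open scoped Classical

noncomputable section

open MvPolynomial

/-- The total-degree-`d` homogeneous component of a polynomial. -/
def totComp (d : ℕ) (f : MvPolynomial ℕ ℂ) : MvPolynomial ℕ ℂ :=
  ∑ m ∈ f.support, if (m.sum fun _ e => e) = d then monomial m (coeff m f) else 0

/-- The `λ`-weight of a monomial: the sum of the weights of its variables
(with multiplicity). -/
def lamWt (lam : ℕ → ℝ) (m : ℕ →₀ ℕ) : ℝ := m.sum fun i e => (e : ℝ) * lam i

/-- The initial part of `f` with respect to the weights `λ`: the sum of the terms of
`f` of maximal `λ`-weight. -/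
def lamInit (lam : ℕ → ℝ) (f : MvPolynomial ℕ ℂ) : MvPolynomial ℕ ℂ :=
  ∑ m ∈ f.support, if (∀ m' ∈ f.support, lamWt lam m' ≤ lamWt lam m)
    then monomial m (coeff m f) else 0

/-- The initial subalgebra of `A` with respect to the weights `λ` (as a
ℂ-submodule): the span of the `λ`-initial parts of elements of `A`. -/
def lamSpan (lam : ℕ → ℝ) (A : Subalgebra ℂ (MvPolynomial ℕ ℂ)) :
    Submodule ℂ (MvPolynomial ℕ ℂ) :=
  Submodule.span ℂ (lamInit lam '' (A : Set (MvPolynomial ℕ ℂ)))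

/-!
On monomials of degree at most `M` the weights `λᵢ = -(M+1)^i` refine the degree reverse
lexicographic order: comparing `∑ aᵢ (M+1)^i` compares base-`(M+1)` expansions from the last
variable down. So the top-degree component of each `sⱼ` (an element of `A`, as `A` is homogeneous)
has the same initial term for `<` and for `λ`; both kinds of initial terms being multiplicative,
so has every product of these components. By the sagbi property the initial terms of these
products span `in_<(A)`, whence `in_<(A) ⊆ in_λ(A)`.

Conversely, by homogeneity of `A` it suffices to show that for a homogeneous `f ∈ A` whose
monomials have `λ`-weight at most `W`, the weight-`W` part of `f` lies in `in_<(A)`. Subtracting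
from `f` a multiple of such a product with the same leading monomial lowers the leading monomial,
only adds monomials of weight `< W`, and changes the weight-`W` part by an element of `in_<(A)`.
In a fixed degree the leading monomial only involves variables of the weight-`W` monomials, so it
ranges over a finite set and the process terminates.
-/

open Finsupp MvPolynomial

namespace Sagbi

section Leading

variable {σ R : Type*} [CommSemiring R] {r : (σ →₀ ℕ) → (σ →₀ ℕ) → Prop}

def IsLeading (r : (σ →₀ ℕ) → (σ →₀ ℕ) → Prop) (f : MvPolynomial σ R) (m : σ →₀ ℕ) : Prop :=
  m ∈ f.support ∧ ∀ m' ∈ f.support, m' ≠ m → r m' m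

theorem IsLeading.unique [Std.Asymm r] {f : MvPolynomial σ R} {m m' : σ →₀ ℕ}
    (h : IsLeading r f m) (h' : IsLeading r f m') : m = m' := by
  by_contra hne
  exact Std.Asymm.asymm _ _ (h.2 m' h'.1 (Ne.symm hne)) (h'.2 m h.1 hne)

theorem IsLeading.of_support_subset {f g : MvPolynomial σ R} {m : σ →₀ ℕ}
    (h : IsLeading r f m) (hm : m ∈ g.support) (hgf : g.support ⊆ f.support) :
    IsLeading r g m :=
  ⟨hm, fun m' hm' => h.2 m' (hgf hm')⟩

theorem IsLeading.homogeneousComponent {q : MvPolynomial σ R} {m : σ →₀ ℕ}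
    (h : IsLeading r q m) : IsLeading r (homogeneousComponent m.degree q) m := by
  classical
  refine h.of_support_subset ?_ ?_ <;> rw [support_homogeneousComponent]
  · exact Finset.mem_filter.2 ⟨h.1, rfl⟩
  · exact Finset.filter_subset _ _

theorem isLeading_one [Nontrivial R] : IsLeading r (1 : MvPolynomial σ R) 0 :=
  ⟨by simp, fun m' hm' hne => absurd (by simpa using hm') hne⟩

section Mul

variable [IsStrictOrder (σ →₀ ℕ) r] {f g : MvPolynomial σ R} {a b : σ →₀ ℕ}

theorem IsLeading.rel_add (hr : Covariant (σ →₀ ℕ) (σ →₀ ℕ) (· + ·) r)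
    (hf : IsLeading r f a) (hg : IsLeading r g b) {u v : σ →₀ ℕ}
    (hu : u ∈ f.support) (hv : v ∈ g.support) (hne : (u, v) ≠ (a, b)) :
    r (u + v) (a + b) := by
  have hr' : ∀ (z : σ →₀ ℕ) {x y : σ →₀ ℕ}, r x y → r (x + z) (y + z) := fun z x y h => by
    simpa only [add_comm z] using hr z h
  rcases eq_or_ne u a with rfl | hua <;> rcases eq_or_ne v b with rfl | hvb
  · exact absurd rfl hne
  · exact hr u (hg.2 v hv hvb)
  · exact hr' v (hf.2 u hu hua)
  · exact _root_.trans (hr' v (hf.2 u hu hua)) (hr a (hg.2 v hv hvb))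

theorem IsLeading.coeff_mul (hr : Covariant (σ →₀ ℕ) (σ →₀ ℕ) (· + ·) r)
    (hf : IsLeading r f a) (hg : IsLeading r g b) :
    (f * g).coeff (a + b) = f.coeff a * g.coeff b := by
  classical
  rw [MvPolynomial.coeff_mul, Finset.sum_eq_single_of_mem (a, b) (by simp)]
  rintro ⟨u, v⟩ huv hne
  by_contra h0
  have := hf.rel_add hr hg (MvPolynomial.mem_support_iff.2 (left_ne_zero_of_mul h0))
    (MvPolynomial.mem_support_iff.2 (right_ne_zero_of_mul h0)) hne
  rw [Finset.HasAntidiagonal.mem_antidiagonal.1 huv] at this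
  exact irrefl _ this

theorem IsLeading.mul [NoZeroDivisors R] (hr : Covariant (σ →₀ ℕ) (σ →₀ ℕ) (· + ·) r)
    (hf : IsLeading r f a) (hg : IsLeading r g b) :
    IsLeading r (f * g) (a + b) := by
  classical
  refine ⟨?_, fun m hm hne => ?_⟩
  · rw [MvPolynomial.mem_support_iff, hf.coeff_mul hr hg]
    exact mul_ne_zero (MvPolynomial.mem_support_iff.1 hf.1) (MvPolynomial.mem_support_iff.1 hg.1)
  · obtain ⟨u, hu, v, hv, rfl⟩ := Finset.mem_add.1 (support_mul f g hm)
    exact hf.rel_add hr hg hu hv (by rintro ⟨⟩; exact hne rfl)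

end Mul

theorem IsLeading.rel_of_mem_support_sub_smul {K : Type*} [Field K] {f q : MvPolynomial σ K}
    {m : σ →₀ ℕ} (hf : IsLeading r f m) (hq : IsLeading r q m) {x : σ →₀ ℕ}
    (hx : x ∈ (f - (coeff m f / coeff m q) • q).support) : r x m := by
  classical
  have hxm : x ≠ m := by
    rintro rfl
    rw [MvPolynomial.mem_support_iff, coeff_sub, coeff_smul, smul_eq_mul,
      div_mul_cancel₀ _ (MvPolynomial.mem_support_iff.1 hq.1), sub_self] at hx
    exact hx rfl
  rcases Finset.mem_union.1 (support_sub σ f _ hx) with hx | hx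
  · exact hf.2 x hx hxm
  · exact hq.2 x (MvPolynomial.support_smul hx) hxm

theorem weight_covariant (w : σ → ℝ) :
    Covariant (σ →₀ ℕ) (σ →₀ ℕ) (· + ·) (weight w ⁻¹'o (· < ·)) := fun c a b h => by
  show weight w (c + a) < weight w (c + b)
  simpa only [map_add] using add_lt_add_of_le_of_lt le_rfl h

variable {w : σ → ℝ} {q : MvPolynomial σ R} {m : σ →₀ ℕ}

theorem IsLeading.weight_le (h : IsLeading (weight w ⁻¹'o (· < ·)) q m) {m' : σ →₀ ℕ}
    (hm' : m' ∈ q.support) : weight w m' ≤ weight w m := by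
  rcases eq_or_ne m' m with rfl | hne
  · exact le_rfl
  · exact (h.2 m' hm' hne).le

theorem IsLeading.weightedHomogeneousComponent_eq (h : IsLeading (weight w ⁻¹'o (· < ·)) q m)
    {W : ℝ} (hW : weight w m ≤ W) :
    weightedHomogeneousComponent w W q = if weight w m = W then monomial m (coeff m q) else 0 := by
  classical
  ext x
  rw [coeff_weightedHomogeneousComponent, apply_ite (coeff x), coeff_monomial, coeff_zero]
  by_cases hx : x ∈ q.support
  · rcases eq_or_ne x m with rfl | hne
    · simp
    · have : weight w x < W := (h.2 x hx hne).trans_le hW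
      simp [this.ne, Ne.symm hne]
  · have hne : m ≠ x := fun e => hx (e ▸ h.1)
    simp [MvPolynomial.notMem_support_iff.1 hx, hne]

end Leading

theorem _root_.MvPolynomial.IsHomogeneous.degree_eq_of_mem_support {σ R : Type*}
    [CommSemiring R] {q : MvPolynomial σ R} {d : ℕ} (hq : q.IsHomogeneous d) {m : σ →₀ ℕ}
    (hm : m ∈ q.support) : m.degree = d :=
  (hq.degree_eq_sum_deg_support hm).symm

theorem finite_setOf_degree_eq_support_subset {σ : Type*} (s : Finset σ) (d : ℕ) :
    {m : σ →₀ ℕ | m.degree = d ∧ m.support ⊆ s}.Finite :=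
  (s.finsuppAntidiag d).finite_toSet.subset fun m ⟨hd, hs⟩ => Finset.mem_finsuppAntidiag.2
    ⟨by rw [← hd, degree_apply]; exact (Finset.sum_subset hs (by simp)).symm, hs⟩

theorem exists_mem_support_of_mem_span {σ R : Type*} [CommSemiring R]
    {S : Set (MvPolynomial σ R)} {p : MvPolynomial σ R} (hp : p ∈ Submodule.span R S)
    {m : σ →₀ ℕ} (hm : m ∈ p.support) : ∃ P ∈ S, m ∈ P.support := by
  have hspan : Submodule.span R S ≤ restrictSupport R (⋃ P ∈ S, (P.support : Set (σ →₀ ℕ))) :=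
    Submodule.span_le.2 fun P hP => (mem_restrictSupport_iff R).2
      (Set.subset_biUnion_of_mem (u := fun P : MvPolynomial σ R => (P.support : Set (σ →₀ ℕ))) hP)
  simpa using (mem_restrictSupport_iff R).1 (hspan hp) hm

section DegRevLex

def degRevLexKey (m : ℕ →₀ ℕ) : ℕ ×ₗ (Colex (ℕ →₀ ℕ))ᵒᵈ :=
  toLex (m.degree, OrderDual.toDual (toColex m))

theorem degRevLex_iff (a b : ℕ →₀ ℕ) :
    degRevLex id a b ↔ degRevLexKey a < degRevLexKey b := by
  rw [degRevLexKey, degRevLexKey, Prod.Lex.toLex_lt_toLex, OrderDual.toDual_lt_toDual,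
    Colex.lt_iff]
  simp only [degRevLex, degree_apply, Finsupp.sum, id, ofColex_toColex, and_comm]
  exact or_congr .rfl (and_congr .rfl (exists_congr fun i =>
    and_congr .rfl (forall₂_congr fun j _ => eq_comm)))

theorem degRevLexKey_injective : Function.Injective degRevLexKey := fun a b h => by
  simpa [degRevLexKey] using congrArg (fun k => ofColex (OrderDual.ofDual (ofLex k).2)) h

instance : IsStrictOrder (ℕ →₀ ℕ) (degRevLex id) :=
  (funext₂ fun a b => propext (degRevLex_iff a b) :
    degRevLex id = degRevLexKey ⁻¹'o (· < ·)) ▸ inferInstance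

theorem degRevLex_iff_of_degree_eq {a b : ℕ →₀ ℕ} (h : a.degree = b.degree) :
    degRevLex id a b ↔ toColex b < toColex a := by
  simp [degRevLex_iff, degRevLexKey, Prod.Lex.toLex_lt_toLex, h]

theorem degRevLex_covariant : Covariant (ℕ →₀ ℕ) (ℕ →₀ ℕ) (· + ·) (degRevLex id) := by
  intro c a b h
  rw [degRevLex_iff] at h ⊢
  simp only [degRevLexKey, Prod.Lex.toLex_lt_toLex, OrderDual.toDual_lt_toDual, map_add,
    toColex_add] at h ⊢
  rcases h with h | ⟨hd, h⟩
  · exact .inl (by omega)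
  · exact .inr ⟨by rw [hd], add_lt_add_of_le_of_lt le_rfl h⟩

theorem exists_isLeading_degRevLex {R : Type*} [CommSemiring R] {f : MvPolynomial ℕ R}
    (hf : f ≠ 0) : ∃ m, IsLeading (degRevLex id) f m := by
  obtain ⟨m, hm, hmax⟩ := f.support.exists_max_image degRevLexKey (support_nonempty.2 hf)
  exact ⟨m, hm, fun m' hm' hne => (degRevLex_iff _ _).2
    ((hmax m' hm').lt_of_ne (degRevLexKey_injective.ne hne))⟩

theorem support_subset_range_of_degRevLex {a b : ℕ →₀ ℕ} {n : ℕ} (h : degRevLex id a b)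
    (hdeg : a.degree = b.degree) (ha : a.support ⊆ Finset.range n) :
    b.support ⊆ Finset.range n := by
  obtain ⟨i, hagree, hi⟩ := Colex.lt_iff.1 ((degRevLex_iff_of_degree_eq hdeg).1 h)
  simp only [ofColex_toColex] at hagree hi
  intro j hj
  rcases lt_or_ge i j with hij | hji
  · rw [Finsupp.mem_support_iff, hagree j hij] at hj
    exact ha (Finsupp.mem_support_iff.2 hj)
  · have hi' : i ∈ a.support := Finsupp.mem_support_iff.2 (by omega)
    exact Finset.mem_range.2 (hji.trans_lt (Finset.mem_range.1 (ha hi')))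

theorem exists_isLeading_of_weightedHomogeneousComponent_ne_zero {R : Type*} [CommSemiring R]
    {f : MvPolynomial ℕ R} {d n : ℕ} (hfd : f.IsHomogeneous d) {w : ℕ → ℝ} {W : ℝ}
    (h : weightedHomogeneousComponent w W f ≠ 0)
    (hn : ∀ m ∈ f.support, weight w m = W → m.support ⊆ Finset.range n) :
    ∃ m, IsLeading (degRevLex id) f m ∧ m.degree = d ∧ m.support ⊆ Finset.range n := by
  obtain ⟨x, hx, hxW⟩ : ∃ x ∈ f.support, weight w x = W := by
    by_contra! hx
    exact h (weightedHomogeneousComponent_eq_zero' _ _ hx)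
  obtain ⟨m, hm⟩ := exists_isLeading_degRevLex (support_nonempty.1 ⟨x, hx⟩)
  refine ⟨m, hm, hfd.degree_eq_of_mem_support hm.1, ?_⟩
  rcases eq_or_ne x m with rfl | hne
  · exact hn x hx hxW
  · exact support_subset_range_of_degRevLex (hm.2 x hx hne)
      (by rw [hfd.degree_eq_of_mem_support hx, hfd.degree_eq_of_mem_support hm.1]) (hn x hx hxW)

end DegRevLex

section RevlexWeight

theorem sum_range_mul_pow_lt {c : ℕ} {b : ℕ → ℕ} (hb : ∀ i, b i < c) (n : ℕ) :
    ∑ j ∈ Finset.range n, b j * c ^ j < c ^ n := by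
  induction n with
  | zero => simp
  | succ n ih =>
    rw [Finset.sum_range_succ, pow_succ]
    nlinarith [hb n, Nat.zero_le (c ^ n)]

theorem weight_pow_lt_of_toColex_lt {c : ℕ} {a b : ℕ →₀ ℕ} (hb : ∀ i, b i < c)
    (h : toColex b < toColex a) : weight (c ^ ·) b < weight (c ^ ·) a := by
  obtain ⟨i, hagree, hi⟩ := Colex.lt_iff.1 h
  simp only [ofColex_toColex] at hagree hi
  obtain ⟨N, hN⟩ := Finset.exists_nat_subset_range (a.support ∪ b.support ∪ {i})
  have hiN : i + 1 ≤ N := Finset.mem_range.1 (hN (by simp))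
  have hexpand : ∀ x : ℕ →₀ ℕ, x.support ⊆ Finset.range N →
      weight (c ^ ·) x = ∑ j ∈ Finset.range i, x j * c ^ j + x i * c ^ i +
        ∑ j ∈ Finset.Ico (i + 1) N, x j * c ^ j := by
    intro x hx
    rw [weight_apply, Finsupp.sum_of_support_subset x hx _ (by simp), ← Finset.sum_range_succ,
      Finset.sum_range_add_sum_Ico _ hiN]
    simp [smul_eq_mul]
  have htail : ∑ j ∈ Finset.Ico (i + 1) N, b j * c ^ j =
      ∑ j ∈ Finset.Ico (i + 1) N, a j * c ^ j :=
    Finset.sum_congr rfl fun j hj => by rw [hagree j (Finset.mem_Ico.1 hj).1]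
  rw [hexpand a fun j hj => hN (by simp [hj]), hexpand b fun j hj => hN (by simp [hj]), htail]
  have hlow := sum_range_mul_pow_lt hb i
  have hdigit : b i * c ^ i + c ^ i ≤ a i * c ^ i := by
    simpa only [Nat.succ_mul] using Nat.mul_le_mul_right (c ^ i) hi
  linarith [Nat.zero_le (∑ j ∈ Finset.range i, a j * c ^ j)]

def revlexWeight (M i : ℕ) : ℝ := -((M + 1 : ℝ) ^ i)

theorem weight_revlexWeight (M : ℕ) (m : ℕ →₀ ℕ) :
    weight (revlexWeight M) m = -((weight ((M + 1) ^ ·) m : ℕ) : ℝ) := by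
  simp [weight_apply, revlexWeight, Finsupp.sum, nsmul_eq_mul]

theorem IsLeading.revlexWeight {R : Type*} [CommSemiring R] {q : MvPolynomial ℕ R}
    {m : ℕ →₀ ℕ} (hq : IsLeading (degRevLex id) q m) {d M : ℕ} (hqd : q.IsHomogeneous d)
    (hdM : d ≤ M) : IsLeading (weight (revlexWeight M) ⁻¹'o (· < ·)) q m := by
  refine ⟨hq.1, fun m' hm' hne => ?_⟩
  have hcolex : toColex m < toColex m' := (degRevLex_iff_of_degree_eq (by
    rw [hqd.degree_eq_of_mem_support hm', hqd.degree_eq_of_mem_support hq.1])).1 (hq.2 m' hm' hne)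
  have hdigits : ∀ i, m i < M + 1 := fun i => Nat.lt_succ_of_le
    ((le_degree i m).trans ((hqd.degree_eq_of_mem_support hq.1).trans_le hdM))
  show weight _ m' < weight _ m
  rw [weight_revlexWeight, weight_revlexWeight, neg_lt_neg_iff, Nat.cast_lt]
  exact weight_pow_lt_of_toColex_lt hdigits hcolex

end RevlexWeight

section InitialForms

theorem initTerm_eq_monomial {σ : Type*} {r : (σ →₀ ℕ) → (σ →₀ ℕ) → Prop} [Std.Asymm r]
    {f : MvPolynomial σ ℂ} {m : σ →₀ ℕ} (h : IsLeading r f m) :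
    initTerm r f = monomial m (coeff m f) := by
  have hex : ∃ m, m ∈ f.support ∧ ∀ m' ∈ f.support, m' ≠ m → r m' m := ⟨m, h⟩
  rw [initTerm, dif_pos hex, ← h.unique (m' := hex.choose) hex.choose_spec]

theorem initTerm_zero {σ : Type*} (r : (σ →₀ ℕ) → (σ →₀ ℕ) → Prop) :
    initTerm r (0 : MvPolynomial σ ℂ) = 0 :=
  dif_neg (by simp)

theorem coeff_sum_support_ite {σ R : Type*} [CommSemiring R] (P : (σ →₀ ℕ) → Prop)
    [DecidablePred P] (f : MvPolynomial σ R) (m : σ →₀ ℕ) :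
    coeff m (∑ m' ∈ f.support, if P m' then monomial m' (coeff m' f) else 0) =
      if P m then coeff m f else 0 := by
  rw [← Finset.sum_filter, coeff_sum]
  simp only [coeff_monomial, Finset.sum_ite_eq', Finset.mem_filter, MvPolynomial.mem_support_iff]
  by_cases h : coeff m f = 0 <;> simp [h]

theorem totComp_eq_homogeneousComponent (d : ℕ) (f : MvPolynomial ℕ ℂ) :
    totComp d f = homogeneousComponent d f := by
  ext m
  rw [totComp, coeff_sum_support_ite, coeff_homogeneousComponent]
  rfl

theorem lamInit_eq_weightedHomogeneousComponent {lam : ℕ → ℝ} {f : MvPolynomial ℕ ℂ} {W : ℝ}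
    (hW : ∀ m ∈ f.support, weight lam m ≤ W) {m₀ : ℕ →₀ ℕ} (hm₀ : m₀ ∈ f.support)
    (hm₀W : weight lam m₀ = W) :
    lamInit lam f = weightedHomogeneousComponent lam W f := by
  have hwt : ∀ m, lamWt lam m = weight lam m := fun m => by
    simp [lamWt, weight_apply, nsmul_eq_mul]
  ext x
  rw [lamInit, coeff_sum_support_ite, coeff_weightedHomogeneousComponent]
  simp only [hwt]
  by_cases hx : x ∈ f.support
  · congr 1
    exact propext ⟨fun hmax => le_antisymm (hW x hx) (hm₀W ▸ hmax m₀ hm₀),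
      fun hxW m' hm' => hxW ▸ hW m' hm'⟩
  · simp [MvPolynomial.notMem_support_iff.1 hx]

theorem exists_lamInit_eq_weightedHomogeneousComponent (lam : ℕ → ℝ) (f : MvPolynomial ℕ ℂ) :
    ∃ W, (∀ m ∈ f.support, weight lam m ≤ W) ∧
      lamInit lam f = weightedHomogeneousComponent lam W f := by
  rcases eq_or_ne f 0 with rfl | hf
  · exact ⟨0, by simp, by simp [lamInit]⟩
  obtain ⟨m₀, hm₀, hmax⟩ := f.support.exists_max_image (weight lam) (support_nonempty.2 hf)
  exact ⟨_, hmax, lamInit_eq_weightedHomogeneousComponent hmax hm₀ rfl⟩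

theorem IsLeading.lamInit {lam : ℕ → ℝ} {q : MvPolynomial ℕ ℂ} {m : ℕ →₀ ℕ}
    (h : IsLeading (weight lam ⁻¹'o (· < ·)) q m) : lamInit lam q = monomial m (coeff m q) := by
  rw [lamInit_eq_weightedHomogeneousComponent (fun _ => h.weight_le) h.1 rfl,
    h.weightedHomogeneousComponent_eq le_rfl, if_pos rfl]

end InitialForms

section Subalgebra

variable {A : Subalgebra ℂ (MvPolynomial ℕ ℂ)} {lam : ℕ → ℝ}

def IsAdaptedWeight (lam : ℕ → ℝ) (A : Subalgebra ℂ (MvPolynomial ℕ ℂ)) : Prop :=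
  ∀ f ∈ A, ∀ m, IsLeading (degRevLex id) f m →
    ∃ q ∈ A, q.IsHomogeneous m.degree ∧ IsLeading (degRevLex id) q m ∧
      IsLeading (weight lam ⁻¹'o (· < ·)) q m

theorem exists_isLeading_of_mem_closure_initTerm
    (hAhomog : ∀ f ∈ A, ∀ d, homogeneousComponent d f ∈ A) {M : ℕ} {s : ℕ → MvPolynomial ℕ ℂ}
    (hdeg : ∀ j, (s j).totalDegree ≤ M) (hsA : ∀ j, s j ∈ A) {P : MvPolynomial ℕ ℂ}
    (hP : P ∈ Submonoid.closure (Set.range fun j => initTerm (degRevLex id) (s j)))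
    {m : ℕ →₀ ℕ} (hm : m ∈ P.support) :
    ∃ q ∈ A, IsLeading (degRevLex id) q m ∧
      IsLeading (weight (revlexWeight M) ⁻¹'o (· < ·)) q m := by
  classical
  induction hP using Submonoid.closure_induction generalizing m with
  | mem x hx =>
    obtain ⟨j, rfl⟩ := hx
    have hs0 : s j ≠ 0 := by
      rintro h
      simp [h, initTerm_zero] at hm
    obtain ⟨m', hm'⟩ := exists_isLeading_degRevLex hs0
    dsimp only at hm
    rw [initTerm_eq_monomial hm'] at hm
    rw [Finset.mem_singleton.1 (support_monomial_subset hm)]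
    exact ⟨_, hAhomog _ (hsA j) m'.degree, hm'.homogeneousComponent,
      hm'.homogeneousComponent.revlexWeight (homogeneousComponent_isHomogeneous _ _)
        ((le_totalDegree hm'.1).trans (hdeg j))⟩
  | one =>
    rw [show m = 0 by simpa using hm]
    exact ⟨1, A.one_mem, isLeading_one, isLeading_one⟩
  | mul x y _ _ ihx ihy =>
    obtain ⟨u, hu, v, hv, rfl⟩ := Finset.mem_add.1 (support_mul x y hm)
    obtain ⟨q₁, hq₁A, hq₁, hq₁w⟩ := ihx hu
    obtain ⟨q₂, hq₂A, hq₂, hq₂w⟩ := ihy hv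
    exact ⟨q₁ * q₂, A.mul_mem hq₁A hq₂A, hq₁.mul degRevLex_covariant hq₂,
      hq₁w.mul (weight_covariant _) hq₂w⟩

theorem isAdaptedWeight_revlexWeight (hAhomog : ∀ f ∈ A, ∀ d, homogeneousComponent d f ∈ A)
    {M : ℕ} {s : ℕ → MvPolynomial ℕ ℂ} (hdeg : ∀ j, (s j).totalDegree ≤ M) (hsA : ∀ j, s j ∈ A)
    (hsagbi : Subalgebra.toSubmodule
        (Algebra.adjoin ℂ (Set.range fun j => initTerm (degRevLex id) (s j))) =
      initSpan (degRevLex id) A) :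
    IsAdaptedWeight (revlexWeight M) A := by
  intro f hf m hm
  have hmem : initTerm (degRevLex id) f ∈ Submodule.span ℂ
      (Submonoid.closure (Set.range fun j => initTerm (degRevLex id) (s j)) : Set _) := by
    rw [← Algebra.adjoin_eq_span, hsagbi]
    exact Submodule.subset_span ⟨f, hf, rfl⟩
  obtain ⟨P, hP, hmP⟩ := exists_mem_support_of_mem_span hmem
    (by rw [initTerm_eq_monomial hm, MvPolynomial.mem_support_iff, coeff_monomial, if_pos rfl]
        exact MvPolynomial.mem_support_iff.1 hm.1)
  obtain ⟨q, hqA, hq, hqw⟩ := exists_isLeading_of_mem_closure_initTerm hAhomog hdeg hsA hP hmP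
  exact ⟨_, hAhomog q hqA m.degree, homogeneousComponent_isHomogeneous _ _,
    hq.homogeneousComponent, hqw.homogeneousComponent⟩

theorem IsAdaptedWeight.initTerm_mem_lamSpan (hA : IsAdaptedWeight lam A)
    {f : MvPolynomial ℕ ℂ} (hf : f ∈ A) : initTerm (degRevLex id) f ∈ lamSpan lam A := by
  rcases eq_or_ne f 0 with rfl | hf0
  · rw [initTerm_zero]
    exact zero_mem _
  obtain ⟨m, hm⟩ := exists_isLeading_degRevLex hf0
  obtain ⟨q, hqA, -, -, hqw⟩ := hA f hf m hm
  have hfq : initTerm (degRevLex id) f = (coeff m f / coeff m q) • lamInit lam q := by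
    rw [initTerm_eq_monomial hm, hqw.lamInit, smul_monomial, smul_eq_mul,
      div_mul_cancel₀ _ (MvPolynomial.mem_support_iff.1 hqw.1)]
  rw [hfq]
  exact Submodule.smul_mem _ _ (Submodule.subset_span ⟨q, hqA, rfl⟩)

theorem weightedHomogeneousComponent_mem_initSpan_of_isLeading {q : MvPolynomial ℕ ℂ}
    (hqA : q ∈ A) {m : ℕ →₀ ℕ} (hq : IsLeading (degRevLex id) q m)
    (hqw : IsLeading (weight lam ⁻¹'o (· < ·)) q m) {W : ℝ} (hW : weight lam m ≤ W) :
    weightedHomogeneousComponent lam W q ∈ initSpan (degRevLex id) A := by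
  rw [hqw.weightedHomogeneousComponent_eq hW, ← initTerm_eq_monomial hq]
  split_ifs
  · exact Submodule.subset_span ⟨q, hqA, rfl⟩
  · exact zero_mem _

theorem IsAdaptedWeight.exists_reduction (hA : IsAdaptedWeight lam A) {f : MvPolynomial ℕ ℂ}
    (hf : f ∈ A) {d : ℕ} (hfd : f.IsHomogeneous d) {m₀ : ℕ →₀ ℕ}
    (hm₀ : IsLeading (degRevLex id) f m₀) {W : ℝ} (hW : ∀ m ∈ f.support, weight lam m ≤ W) :
    ∃ g ∈ A, g.IsHomogeneous d ∧
      (∀ x ∈ g.support, degRevLex id x m₀ ∧ (x ∈ f.support ∨ weight lam x < W)) ∧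
      weightedHomogeneousComponent lam W f - weightedHomogeneousComponent lam W g ∈
        initSpan (degRevLex id) A := by
  obtain ⟨q, hqA, hqd, hq, hqw⟩ := hA f hf m₀ hm₀
  rw [hfd.degree_eq_of_mem_support hm₀.1] at hqd
  set c := coeff m₀ f / coeff m₀ q
  refine ⟨f - c • q, A.sub_mem hf (A.smul_mem hqA c),
    hfd.sub (by simpa only [smul_eq_C_mul] using hqd.C_mul c), fun x hx => ?_, ?_⟩
  · have hlt := hm₀.rel_of_mem_support_sub_smul hq hx
    refine ⟨hlt, (Finset.mem_union.1 (support_sub ℕ f _ hx)).imp id fun hxq => ?_⟩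
    have : weight lam x < weight lam m₀ :=
      hqw.2 x (MvPolynomial.support_smul hxq) (ne_of_irrefl hlt)
    exact this.trans_le (hW m₀ hm₀.1)
  · simpa using Submodule.smul_mem _ c
      (weightedHomogeneousComponent_mem_initSpan_of_isLeading hqA hq hqw (hW m₀ hm₀.1))

theorem IsAdaptedWeight.weightedHomogeneousComponent_mem_initSpan (hA : IsAdaptedWeight lam A)
    {f : MvPolynomial ℕ ℂ} (hf : f ∈ A) {d : ℕ} (hfd : f.IsHomogeneous d) {W : ℝ}
    (hW : ∀ m ∈ f.support, weight lam m ≤ W) :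
    weightedHomogeneousComponent lam W f ∈ initSpan (degRevLex id) A := by
  obtain ⟨n, hn⟩ := Finset.exists_nat_subset_range (f.support.biUnion Finsupp.support)
  suffices key : ∀ m₀, m₀ ∈ {m : ℕ →₀ ℕ | m.degree = d ∧ m.support ⊆ Finset.range n} →
      ∀ f ∈ A, f.IsHomogeneous d → IsLeading (degRevLex id) f m₀ →
        (∀ m ∈ f.support, weight lam m ≤ W) →
        (∀ m ∈ f.support, weight lam m = W → m.support ⊆ Finset.range n) →
        weightedHomogeneousComponent lam W f ∈ initSpan (degRevLex id) A by
    rcases eq_or_ne (weightedHomogeneousComponent lam W f) 0 with h0 | h0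
    · rw [h0]
      exact zero_mem _
    have hfn : ∀ m ∈ f.support, weight lam m = W → m.support ⊆ Finset.range n :=
      fun m hm _ => (Finset.subset_biUnion_of_mem _ hm).trans hn
    obtain ⟨m₀, hm₀, hbox⟩ := exists_isLeading_of_weightedHomogeneousComponent_ne_zero hfd h0 hfn
    exact key m₀ hbox f hf hfd hm₀ hW hfn
  intro m₀
  have hwf := (finite_setOf_degree_eq_support_subset (Finset.range n) d).wellFoundedOn
    (r := degRevLex id)
  induction m₀ using WellFounded.induction (Set.wellFoundedOn_iff.1 hwf) with
  | h m₀ ih =>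
    intro hm₀box f hf hfd hm₀ hW hn
    obtain ⟨g, hgA, hgd, hg, hfg⟩ := hA.exists_reduction hf hfd hm₀ hW
    have hgW : ∀ x ∈ g.support, weight lam x ≤ W := fun x hx =>
      (hg x hx).2.elim (hW x) le_of_lt
    have hgn : ∀ x ∈ g.support, weight lam x = W → x.support ⊆ Finset.range n := fun x hx hxW =>
      (hg x hx).2.elim (fun hxf => hn x hxf hxW) fun hlt => absurd hxW hlt.ne
    have hgB : weightedHomogeneousComponent lam W g ∈ initSpan (degRevLex id) A := by
      rcases eq_or_ne (weightedHomogeneousComponent lam W g) 0 with h0 | h0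
      · rw [h0]
        exact zero_mem _
      obtain ⟨m₁, hm₁, hbox⟩ := exists_isLeading_of_weightedHomogeneousComponent_ne_zero hgd h0 hgn
      exact ih m₁ ⟨(hg m₁ hm₁.1).1, hbox, hm₀box⟩ hbox g hgA hgd hm₁ hgW hgn
    simpa using add_mem hfg hgB

theorem IsAdaptedWeight.lamInit_mem_initSpan (hA : IsAdaptedWeight lam A)
    (hAhomog : ∀ f ∈ A, ∀ d, homogeneousComponent d f ∈ A) {f : MvPolynomial ℕ ℂ} (hf : f ∈ A) :
    lamInit lam f ∈ initSpan (degRevLex id) A := by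
  classical
  obtain ⟨W, hW, hfW⟩ := exists_lamInit_eq_weightedHomogeneousComponent lam f
  rw [hfW, ← sum_homogeneousComponent f, map_sum]
  refine Submodule.sum_mem _ fun e _ => hA.weightedHomogeneousComponent_mem_initSpan
    (hAhomog f hf e) (homogeneousComponent_isHomogeneous e f) fun m hm => hW m ?_
  rw [support_homogeneousComponent] at hm
  exact Finset.mem_of_mem_filter m hm

end Subalgebra

end Sagbi

open Sagbi

/-- If `A ⊆ ℂ[x₁,x₂,…]` is homogeneous with respect to total degree
and has a sagbi basis of total degree at most `M` with respect to the degree reverse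
lexicographic order, then there is a weight sequence `λ` with `in_λ(A) = in_<(A)`. -/
theorem statement2 (A : Subalgebra ℂ (MvPolynomial ℕ ℂ))
    (hAhomog : ∀ f ∈ A, ∀ d, totComp d f ∈ A)
    (M : ℕ) (s : ℕ → MvPolynomial ℕ ℂ)
    (hdeg : ∀ j, (s j).totalDegree ≤ M)
    (hgen : Algebra.adjoin ℂ (Set.range s) = A)
    (hsagbi : Subalgebra.toSubmodule
        (Algebra.adjoin ℂ (Set.range fun j => initTerm (degRevLex id) (s j))) =
      initSpan (degRevLex id) A) :
    ∃ lam : ℕ → ℝ, lamSpan lam A = initSpan (degRevLex id) A := by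
  have hAhomog' : ∀ f ∈ A, ∀ d, homogeneousComponent d f ∈ A := fun f hf d =>
    totComp_eq_homogeneousComponent d f ▸ hAhomog f hf d
  have hsA : ∀ j, s j ∈ A := fun j => hgen ▸ Algebra.subset_adjoin ⟨j, rfl⟩
  have hA := isAdaptedWeight_revlexWeight hAhomog' hdeg hsA hsagbi
  refine ⟨revlexWeight M, le_antisymm (Submodule.span_le.2 ?_) (Submodule.span_le.2 ?_)⟩
  · rintro _ ⟨f, hf, rfl⟩
    exact hA.lamInit_mem_initSpan hAhomog' hf
  · rintro _ ⟨f, hf, rfl⟩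
    exact hA.initTerm_mem_lamSpan hf
end
end

section
/- Let (P,≺) be a finite or countable poset, let P = O ⊔ C be a partition, and let Π_{O,C}(P,≺) be the associated interpolating polytope. Then for every k ∈ ℕ₀ and every integer point u in the k-fold dilation k·Π_{O,C}(P,≺) there exists a unique weakly increasing tuple J₁ ⊆ J₂ ⊆ … ⊆ J_k of finite order ideals of (P,≺) such that u = v_{O,C}(J₁) + v_{O,C}(J₂) + … + v_{O,C}(J_k). -/
open scoped Classical Pointwise

noncomputable section

/-- The vertex `v_{O,C}(J)` of the interpolating polytope associated with a finite
order ideal `J`: coordinate `1` at `p` if `p ∈ J ∩ O` or `p` is a maximal element of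
`J` lying in `C`, and `0` otherwise. -/
def vOC {P : Type*} [PartialOrder P] (O C : Set P) (J : Finset P) : P →₀ ℝ :=
  ∑ p ∈ J, if p ∈ O ∨ (p ∈ C ∧ ∀ q ∈ J, ¬ p < q) then Finsupp.single p 1 else 0

/-!
Let `Y p` count the ideals of a chain `J₁ ⊆ ⋯ ⊆ J_k` that contain `p`. Such chains of finite
order ideals correspond to antitone finitely supported `Y : P → {0, …, k}`, and the sum of the
vertices `v_{O,C}(Jᵢ)` is the transfer of `Y`: `Y p` at `p ∈ O` and `Y p - max_{q > p} Y q` at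
`p ∈ C`. The transfer is injective, as `Y` can be solved for from the top down; this gives
uniqueness. For existence, solve `Y p = u p + [p ∈ C] max_{q > p} Y q` in the same way. Writing
`u = ∑ μ_J v_{O,C}(J)` with `∑ μ_J = k`, the point `X = ∑ μ_J 𝟙_J` of the `k`-dilated order
polytope dominates the solution, so `Y ≤ k`, and `Y` is antitone.
-/

theorem Set.Finite.induction_from_above {α : Type*} [Preorder α] {S : Set α} (hS : S.Finite)
    {Q : α → Prop} (hout : ∀ a ∉ S, Q a) (hstep : ∀ a, (∀ b, a < b → Q b) → Q a) (a : α) :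
    Q a := by
  by_cases ha : a ∈ S
  · refine (hS.wellFoundedOn (r := (· > ·))).induction ha fun x _ ih => hstep x fun y hxy => ?_
    by_cases hy : y ∈ S
    · exact ih y hy hxy
    · exact hout y hy
  · exact hout a ha

namespace InterpolatingPolytope

open Finset

section Chains

variable {P : Type*}

/-- The chain `J_0 ⊆ ⋯ ⊆ J_{k-1}` whose member `J_i` is the superlevel set `{Y ≥ k - i}`. -/
def chain (k : ℕ) (Y : P →₀ ℕ) (i : Fin k) : Finset P :=
  Y.support.filter fun p => k ≤ i + Y p

theorem mem_chain {k : ℕ} {Y : P →₀ ℕ} {i : Fin k} {p : P} : p ∈ chain k Y i ↔ k ≤ i + Y p := by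
  simp only [chain, mem_filter, Finsupp.mem_support_iff]
  exact ⟨And.right, fun h => ⟨by omega, h⟩⟩

theorem monotone_chain (k : ℕ) (Y : P →₀ ℕ) : Monotone (chain k Y) := fun i j hij p => by
  simp only [mem_chain]
  have : (i : ℕ) ≤ j := hij
  omega

theorem isLowerSet_chain [Preorder P] {k : ℕ} {Y : P →₀ ℕ} (hY : Antitone Y) (i : Fin k) :
    IsLowerSet (chain k Y i : Set P) := fun a b hba ha => by
  simp only [mem_coe, mem_chain] at ha ⊢
  have := hY hba
  omega

def height (k : ℕ) (Js : Fin k → Finset P) : P →₀ ℕ :=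
  Finsupp.onFinset (univ.biUnion Js) (fun p => #{i | p ∈ Js i}) fun p hp => by
    obtain ⟨i, hi⟩ := card_ne_zero.1 hp
    exact mem_biUnion.2 ⟨i, mem_univ i, (mem_filter.1 hi).2⟩

theorem height_apply (k : ℕ) (Js : Fin k → Finset P) (p : P) :
    height k Js p = #{i | p ∈ Js i} := rfl

theorem height_le (k : ℕ) (Js : Fin k → Finset P) (p : P) : height k Js p ≤ k :=
  (card_filter_le _ _).trans (card_fin k).le

theorem antitone_height [Preorder P] {k : ℕ} {Js : Fin k → Finset P}
    (hJs : ∀ i, IsLowerSet (Js i : Set P)) : Antitone (height k Js) := fun p q hpq => by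
  rw [height_apply, height_apply]
  refine card_le_card fun i => ?_
  simp only [mem_filter, mem_univ, true_and]
  exact fun hi => hJs i hpq hi

theorem mem_iff_le_add_height {k : ℕ} {Js : Fin k → Finset P} (hJs : Monotone Js) (i : Fin k)
    (p : P) : p ∈ Js i ↔ k ≤ i + height k Js p := by
  rw [height_apply]
  constructor
  · intro hp
    have := card_le_card fun j (hj : j ∈ Ici i) => mem_filter.2 ⟨mem_univ j, hJs (mem_Ici.1 hj) hp⟩
    rw [Fin.card_Ici] at this
    omega
  · intro h
    by_contra hp
    have := card_le_card fun j (hj : j ∈ ({j | p ∈ Js j} : Finset (Fin k))) =>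
      mem_Ioi.2 (lt_of_not_ge fun hji => hp (hJs hji (mem_filter.1 hj).2))
    rw [Fin.card_Ioi] at this
    omega

theorem chain_height {k : ℕ} {Js : Fin k → Finset P} (hJs : Monotone Js) :
    chain k (height k Js) = Js :=
  funext fun i => ext fun p => by rw [mem_chain, mem_iff_le_add_height hJs]

theorem card_filter_fin (k a b : ℕ) (ha : a ≤ k) :
    #{i : Fin k | k ≤ i + a ∧ i + b < k} = a - b := by
  have : ({i : Fin k | k ≤ i + a ∧ i + b < k} : Finset (Fin k)) =
      (Ico (k - a) (k - b)).attachFin fun m hm => by rw [mem_Ico] at hm; omega := by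
    ext i
    simp only [mem_filter, mem_univ, true_and, mem_attachFin, mem_Ico]
    omega
  rw [this, card_attachFin, Nat.card_Ico]
  omega

end Chains

variable {P : Type*} [PartialOrder P]

theorem vOC_apply (O C : Set P) (J : Finset P) (p : P) :
    vOC O C J p = if p ∈ J ∧ (p ∈ O ∨ (p ∈ C ∧ ∀ q ∈ J, ¬ p < q)) then 1 else 0 := by
  rw [vOC, Finsupp.finsetSum_apply]
  simp_rw [apply_ite (fun f : P →₀ ℝ => f p), Finsupp.single_apply, Finsupp.coe_zero,
    Pi.zero_apply, ← ite_and, and_comm (b := _ = p), ite_and, Finset.sum_ite_eq']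

/-- `max_{q > p} Y q`, the empty maximum being `0`. -/
def supAbove (Y : P →₀ ℕ) (p : P) : ℕ :=
  (Y.support.filter (p < ·)).sup Y

theorem supAbove_le_iff {Y : P →₀ ℕ} {p : P} {n : ℕ} :
    supAbove Y p ≤ n ↔ ∀ q, p < q → Y q ≤ n := by
  simp only [supAbove, Finset.sup_le_iff, mem_filter, Finsupp.mem_support_iff]
  exact ⟨fun h q hpq => (eq_or_ne (Y q) 0).elim (fun h0 => h0 ▸ n.zero_le)
    fun h0 => h q ⟨h0, hpq⟩, fun h q hq => h q hq.2⟩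

theorem le_supAbove (Y : P →₀ ℕ) {p q : P} (hpq : p < q) : Y q ≤ supAbove Y p :=
  supAbove_le_iff.1 le_rfl q hpq

theorem supAbove_le_of_antitone {Y : P →₀ ℕ} (hY : Antitone Y) (p : P) : supAbove Y p ≤ Y p :=
  supAbove_le_iff.2 fun _ hpq => hY hpq.le

theorem supAbove_congr {Y Y' : P →₀ ℕ} {p : P} (h : ∀ q, p < q → Y q = Y' q) :
    supAbove Y p = supAbove Y' p :=
  le_antisymm (supAbove_le_iff.2 fun q hpq => h q hpq ▸ le_supAbove Y' hpq)
    (supAbove_le_iff.2 fun q hpq => h q hpq ▸ le_supAbove Y hpq)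

theorem supAbove_eq_zero_or_exists (Y : P →₀ ℕ) (p : P) :
    supAbove Y p = 0 ∨ ∃ q, p < q ∧ supAbove Y p = Y q := by
  rcases (Y.support.filter (p < ·)).eq_empty_or_nonempty with h | h
  · exact Or.inl (by simp [supAbove, h])
  · obtain ⟨q, hq, hsup⟩ := exists_mem_eq_sup _ h Y
    exact Or.inr ⟨q, (mem_filter.1 hq).2, hsup⟩

/-- The transfer map from order-polytope coordinates to interpolating-polytope coordinates. -/
def transfer (O : Set P) (Y : P →₀ ℕ) (p : P) : ℝ :=
  Y p - if p ∈ O then 0 else (supAbove Y p : ℝ)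

theorem transfer_eq_iff {O : Set P} {Y : P →₀ ℕ} {u : P → ℝ} :
    transfer O Y = u ↔ ∀ p, (Y p : ℝ) = u p + if p ∈ O then 0 else (supAbove Y p : ℝ) := by
  simp only [funext_iff, transfer, sub_eq_iff_eq_add]

/-- `Y` is recovered from its transfer from the top down. -/
theorem eq_of_transfer_eq {O : Set P} {Y Y' : P →₀ ℕ} (h : transfer O Y = transfer O Y') :
    Y = Y' := by
  ext p
  refine (Y.support ∪ Y'.support).finite_toSet.induction_from_above
    (Q := fun a => Y a = Y' a) (fun a ha => ?_) (fun a ih => ?_) p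
  · simp only [coe_union, Set.mem_union, mem_coe, Finsupp.mem_support_iff, not_or,
      not_not] at ha
    rw [ha.1, ha.2]
  · have ha := congrFun h a
    simp only [transfer, supAbove_congr ih] at ha
    exact_mod_cast sub_left_inj.1 ha

theorem sum_vOC_chain_apply {O C : Set P} (hOC : O ∪ C = Set.univ) {k : ℕ} {Y : P →₀ ℕ}
    (hY : Antitone Y) (hk : ∀ p, Y p ≤ k) (p : P) :
    (∑ i : Fin k, vOC O C (chain k Y i)) p = transfer O Y p := by
  set s := if p ∈ O then 0 else supAbove Y p with hs
  have hcond : ∀ i : Fin k, (p ∈ chain k Y i ∧ (p ∈ O ∨ (p ∈ C ∧ ∀ q ∈ chain k Y i, ¬ p < q)))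
      ↔ (k ≤ i + Y p ∧ i + s < k) := by
    intro i
    have hi := i.isLt
    rw [mem_chain]
    by_cases hpO : p ∈ O
    · simp [hs, hpO, hi]
    have hpC : p ∈ C := ((Set.ext_iff.1 hOC p).2 trivial).resolve_left hpO
    have hmax : (∀ q ∈ chain k Y i, ¬ p < q) ↔ i + s < k := by
      rw [hs, if_neg hpO, show i + supAbove Y p < k ↔ supAbove Y p ≤ k - 1 - i by omega,
        supAbove_le_iff]
      simp only [mem_chain]
      exact ⟨fun h q hpq => by by_contra; exact h q (by omega) hpq,
        fun h q hq hpq => by have := h q hpq; omega⟩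
    simp [hpO, hpC, hmax]
  simp_rw [Finsupp.finsetSum_apply, vOC_apply]
  rw [sum_boole, filter_congr fun i _ => hcond i, card_filter_fin k _ _ (hk p), transfer,
    Nat.cast_sub (by rw [hs]; split_ifs <;> simp [supAbove_le_of_antitone hY])]
  rw [hs]
  split_ifs <;> simp

/-- The points of `S` are added one at a time, each minimal among those present, so that the
equations already solved are unaffected. -/
theorem exists_eq_add_supAbove_on (O : Set P) (w : P → ℕ) (S : Finset P) :
    ∃ Y : P →₀ ℕ, Y.support ⊆ S ∧
      ∀ p ∈ S, Y p = w p + if p ∈ O then 0 else supAbove Y p := by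
  induction S using Finset.strongInduction with
  | H S ih =>
  rcases S.eq_empty_or_nonempty with rfl | hS
  · exact ⟨0, by simp, by simp⟩
  obtain ⟨m, hm⟩ := S.exists_minimal hS
  obtain ⟨Y, hsupp, hY⟩ := ih (S.erase m) (erase_ssubset hm.prop)
  have hcongr : ∀ p ∈ S, ∀ v, supAbove (Y.update m v) p = supAbove Y p := fun p hp v =>
    supAbove_congr fun q hpq => by
      rw [Finsupp.update_apply, if_neg]
      rintro rfl
      exact hpq.not_ge (hm.2 hp hpq.le)
  refine ⟨Y.update m (w m + if m ∈ O then 0 else supAbove Y m), ?_, fun p hp => ?_⟩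
  · refine (Finsupp.support_update_subset _ _).trans (insert_subset hm.prop ?_)
    exact hsupp.trans (erase_subset m S)
  · rw [hcongr p hp, Finsupp.update_apply]
    by_cases hpm : p = m
    · rw [if_pos hpm, hpm]
    · rw [if_neg hpm]
      exact hY p (mem_erase.2 ⟨hpm, hp⟩)

theorem exists_eq_add_supAbove (O : Set P) {w : P → ℕ} {S : Finset P}
    (hS : IsLowerSet (S : Set P)) (hw : ∀ p ∉ S, w p = 0) :
    ∃ Y : P →₀ ℕ, ∀ p, Y p = w p + if p ∈ O then 0 else supAbove Y p := by
  obtain ⟨Y, hsupp, hY⟩ := exists_eq_add_supAbove_on O w S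
  refine ⟨Y, fun p => ?_⟩
  by_cases hp : p ∈ S
  · exact hY p hp
  have hYp : Y p = 0 := Finsupp.notMem_support_iff.1 fun h => hp (hsupp h)
  have hsup : supAbove Y p = 0 := Nat.le_zero.1 <| supAbove_le_iff.2 fun q hpq =>
    (Finsupp.notMem_support_iff.1 fun hq => hp (hS hpq.le (hsupp hq))).le
  simp [hYp, hw p hp, hsup]

/-- `X` is a point of the order polytope dilated by `c` that sits over `u`. For
`u = ∑ μ_J v_{O,C}(J)` one takes `X = ∑ μ_J 𝟙_J`; these inequalities are what survives of such
a representation. -/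
structure IsOrderLift (O : Set P) (c : ℝ) (u X : P →₀ ℝ) : Prop where
  nonneg : ∀ p, 0 ≤ u p
  le : ∀ p, u p ≤ X p
  le_bound : ∀ p, X p ≤ c
  antitone : Antitone X
  eq_of_mem : ∀ p ∈ O, X p = u p
  add_le : ∀ p ∉ O, ∀ q, p < q → u p + X q ≤ X p

namespace IsOrderLift

variable {O : Set P} {c c' : ℝ} {u u' X X' : P →₀ ℝ} {Y : P →₀ ℕ}

theorem add (h : IsOrderLift O c u X) (h' : IsOrderLift O c' u' X') :
    IsOrderLift O (c + c') (u + u') (X + X') where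
  nonneg p := add_nonneg (h.nonneg p) (h'.nonneg p)
  le p := add_le_add (h.le p) (h'.le p)
  le_bound p := add_le_add (h.le_bound p) (h'.le_bound p)
  antitone := by rw [Finsupp.coe_add]; exact h.antitone.add h'.antitone
  eq_of_mem p hp := by simp [h.eq_of_mem p hp, h'.eq_of_mem p hp]
  add_le p hp q hpq := by
    have := h.add_le p hp q hpq
    have := h'.add_le p hp q hpq
    simp only [Finsupp.coe_add, Pi.add_apply]
    linarith

theorem smul (h : IsOrderLift O c u X) {a : ℝ} (ha : 0 ≤ a) :
    IsOrderLift O (a * c) (a • u) (a • X) where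
  nonneg p := mul_nonneg ha (h.nonneg p)
  le p := mul_le_mul_of_nonneg_left (h.le p) ha
  le_bound p := mul_le_mul_of_nonneg_left (h.le_bound p) ha
  antitone := h.antitone.const_mul ha
  eq_of_mem p hp := by simp [h.eq_of_mem p hp]
  add_le p hp q hpq := by
    simpa only [Finsupp.smul_apply, smul_eq_mul, ← mul_add] using
      mul_le_mul_of_nonneg_left (h.add_le p hp q hpq) ha

theorem isLowerSet_support (h : IsOrderLift O c u X) : IsLowerSet (X.support : Set P) :=
  fun q p hpq hq => by
  have hXq : 0 < X q :=
    lt_of_le_of_ne ((h.nonneg q).trans (h.le q)) (Finsupp.mem_support_iff.1 hq).symm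
  exact Finsupp.mem_support_iff.2 (hXq.trans_le (h.antitone hpq)).ne'

theorem eq_zero_of_notMem_support (h : IsOrderLift O c u X) {p : P} (hp : p ∉ X.support) :
    u p = 0 :=
  le_antisymm (Finsupp.notMem_support_iff.1 hp ▸ h.le p) (h.nonneg p)

theorem natCast_le_of_transfer_eq (h : IsOrderLift O c u X) (hY : transfer O Y = u) (p : P) :
    (Y p : ℝ) ≤ X p := by
  refine Y.support.finite_toSet.induction_from_above (Q := fun p => (Y p : ℝ) ≤ X p)
    (fun a ha => ?_) (fun a ih => ?_) p
  · rw [Finsupp.notMem_support_iff.1 ha, Nat.cast_zero]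
    exact (h.nonneg a).trans (h.le a)
  rw [transfer_eq_iff.1 hY a]
  by_cases ha : a ∈ O
  · simpa [ha] using h.le a
  rw [if_neg ha]
  rcases supAbove_eq_zero_or_exists Y a with h0 | ⟨q, haq, hq⟩
  · simpa [h0] using h.le a
  · rw [hq]
    linarith [ih q haq, h.add_le a ha q haq]

theorem antitone_of_transfer_eq (h : IsOrderLift O c u X) (hY : transfer O Y = u) :
    Antitone Y := by
  intro p q hpq
  rcases hpq.eq_or_lt with rfl | hlt
  · rfl
  have hYp := transfer_eq_iff.1 hY p
  by_cases hp : p ∈ O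
  · have : (Y q : ℝ) ≤ Y p := by
      rw [hYp, if_pos hp, add_zero, ← h.eq_of_mem p hp]
      exact (h.natCast_le_of_transfer_eq hY q).trans (h.antitone hpq)
    exact_mod_cast this
  · have : (supAbove Y p : ℝ) ≤ Y p := by
      rw [hYp, if_neg hp]
      linarith [h.nonneg p]
    exact (le_supAbove Y hlt).trans (by exact_mod_cast this)

theorem exists_transfer_eq (h : IsOrderLift O c u X) (hint : ∀ p, ∃ z : ℤ, u p = z) :
    ∃ Y : P →₀ ℕ, transfer O Y = u := by
  have : ∀ p, ∃ n : ℕ, (n : ℝ) = u p := fun p => by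
    obtain ⟨z, hz⟩ := hint p
    lift z to ℕ using (by exact_mod_cast hz ▸ h.nonneg p)
    exact ⟨z, by rw [hz]; norm_cast⟩
  choose w hw using this
  obtain ⟨Y, hY⟩ := exists_eq_add_supAbove O h.isLowerSet_support (w := w) fun p hp => by
    exact_mod_cast (hw p).trans (h.eq_zero_of_notMem_support hp)
  refine ⟨Y, transfer_eq_iff.2 fun p => ?_⟩
  rw [hY p, ← hw p]
  push_cast
  rfl

end IsOrderLift

/-- The order polytope is the interpolating polytope with `O = P`. -/
theorem vOC_univ_apply (C : Set P) (J : Finset P) (p : P) :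
    vOC Set.univ C J p = if p ∈ J then 1 else 0 := by
  simp [vOC_apply]

theorem isOrderLift_vOC (O C : Set P) {J : Finset P} (hJ : IsLowerSet (J : Set P)) :
    IsOrderLift O 1 (vOC O C J) (vOC Set.univ ∅ J) where
  nonneg p := by rw [vOC_apply]; split_ifs <;> norm_num
  le p := by rw [vOC_apply, vOC_univ_apply]; split_ifs <;> simp_all
  le_bound p := by rw [vOC_univ_apply]; split_ifs <;> norm_num
  antitone p q hpq := by
    simp only [vOC_univ_apply]
    by_cases hq : q ∈ J
    · have hp : p ∈ J := hJ hpq hq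
      simp [hq, hp]
    · simp only [hq, if_false]
      split_ifs <;> norm_num
  eq_of_mem p hp := by simp [vOC_apply, hp]
  add_le p hp q hpq := by
    simp only [vOC_apply]
    by_cases hq : q ∈ J
    · have hpJ : p ∈ J := hJ hpq.le hq
      simp only [hpJ, hq, hp, true_and, false_or]
      rw [if_neg fun h => h.2 q hq hpq]
      norm_num
    · split_ifs <;> simp_all

theorem exists_isOrderLift_of_mem_smul_convexHull {O C : Set P} {k : ℕ} {u : P →₀ ℝ}
    (hu : u ∈ (k : ℝ) • convexHull ℝ
      {x : P →₀ ℝ | ∃ J : Finset P, (∀ a ∈ J, ∀ b, b ≤ a → b ∈ J) ∧ x = vOC O C J}) :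
    ∃ X, IsOrderLift O k u X := by
  obtain ⟨x, hx, rfl⟩ := Set.mem_smul_set.1 hu
  obtain ⟨X, hX⟩ : ∃ X, IsOrderLift O 1 x X := by
    refine convexHull_min (t := {x | ∃ X, IsOrderLift O 1 x X}) ?_ ?_ hx
    · rintro _ ⟨J, hJ, rfl⟩
      exact ⟨_, isOrderLift_vOC O C fun a b hba ha => hJ a ha b hba⟩
    · rintro x ⟨X, hX⟩ y ⟨Y, hY⟩ a b ha hb hab
      exact ⟨a • X + b • Y, by simpa [hab] using (hX.smul ha).add (hY.smul hb)⟩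
  exact ⟨_, by simpa using hX.smul k.cast_nonneg⟩

end InterpolatingPolytope

open InterpolatingPolytope

theorem statement3_general {P : Type*} [PartialOrder P]
    (O C : Set P) (hunion : O ∪ C = Set.univ)
    (k : ℕ) (u : P →₀ ℝ) (hint : ∀ p : P, ∃ z : ℤ, u p = (z : ℝ))
    (hu : u ∈ (k : ℝ) • (convexHull ℝ
      {x : P →₀ ℝ | ∃ J : Finset P, (∀ a ∈ J, ∀ b, b ≤ a → b ∈ J) ∧ x = vOC O C J})) :
    ∃! Js : Fin k → Finset P,
      (∀ i, ∀ a ∈ Js i, ∀ b, b ≤ a → b ∈ Js i) ∧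
        (∀ i j : Fin k, i ≤ j → Js i ⊆ Js j) ∧
        u = ∑ i : Fin k, vOC O C (Js i) := by
  obtain ⟨X, hX⟩ := exists_isOrderLift_of_mem_smul_convexHull hu
  obtain ⟨Y, hY⟩ := hX.exists_transfer_eq hint
  have hanti := hX.antitone_of_transfer_eq hY
  have hk : ∀ p, Y p ≤ k := fun p => by
    exact_mod_cast (hX.natCast_le_of_transfer_eq hY p).trans (hX.le_bound p)
  refine ⟨chain k Y, ⟨fun i a ha b hba => isLowerSet_chain hanti i hba ha,
    fun i j hij => monotone_chain k Y hij, ?_⟩, ?_⟩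
  · ext p
    rw [sum_vOC_chain_apply hunion hanti hk, hY]
  rintro Js ⟨hJlower, hJmono, hJsum⟩
  have hmono : Monotone Js := fun i j hij => hJmono i j hij
  rw [← chain_height hmono]
  congr 1
  refine eq_of_transfer_eq (O := O) (funext fun p => ?_)
  rw [← sum_vOC_chain_apply hunion (antitone_height fun i a b hba ha => hJlower i a ha b hba)
    (height_le k Js), chain_height hmono, ← hJsum, hY]

/-- Every integer point of the `k`-fold dilation of the interpolating
polytope `Π_{O,C}(P,≺)` is the sum of the vertices `v_{O,C}(Jᵢ)` for a unique weakly
increasing `k`-tuple of finite order ideals `J₁ ⊆ … ⊆ J_k`. -/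
theorem statement3 {P : Type*} [PartialOrder P] [Countable P]
    (O C : Set P) (hunion : O ∪ C = Set.univ) (hdisj : O ∩ C = ∅)
    (k : ℕ) (u : P →₀ ℝ) (hint : ∀ p : P, ∃ z : ℤ, u p = (z : ℝ))
    (hu : u ∈ (k : ℝ) • (convexHull ℝ
      {x : P →₀ ℝ | ∃ J : Finset P, (∀ a ∈ J, ∀ b, b ≤ a → b ∈ J) ∧ x = vOC O C J})) :
    ∃! Js : Fin k → Finset P,
      (∀ i, ∀ a ∈ Js i, ∀ b, b ≤ a → b ∈ Js i) ∧
        (∀ i j : Fin k, i ≤ j → Js i ⊆ Js j) ∧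
        u = ∑ i : Fin k, vOC O C (Js i) :=
  statement3_general O C hunion k u hint hu
end
end

section
/- Let (P,≺) be a finite or countable poset with a partition P = O ⊔ C. The monomials s^k · y^{v_{O,C}(J₁)+…+v_{O,C}(J_k)}, where J₁ ⊆ … ⊆ J_k ranges over all finite weakly increasing tuples of finite order ideals of (P,≺) (including the empty tuple for k = 0), form a ℂ-vector-space basis of the generalized Hibi ring A_{O,C}(P,≺). -/
/-! Every product of generators is a monomial with coefficient one, so linear independence is
automatic and the content is that the monoid generated by the `s · y^{v(J)}` consists of the chain
monomials. This rests on a straightening law: for order ideals `J, J'` there is an order ideal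
`K ⊆ J ∩ J'` with `v(J) + v(J') = v(K) + v(J ∪ J')`. One cannot take `K = J ∩ J'`, whose maximal
elements need not be maximal in `J` or `J'`; instead `K` is generated by the elements of `J ∩ J'`
lying in `O` or maximal in `J` or in `J'`. Inserting a generator into a chain by straightening it
against the top of the chain, and recursing with `K` into the rest, keeps the chain sorted. -/

open scoped Classical

noncomputable section

open MvPolynomial

/-- The exponent vector of the generator of the generalized Hibi ring associated with
a finite order ideal `J`: one power of `s` (the variable `none`) and one power of
`y_p` for each `p ∈ J ∩ O` and each maximal element `p` of `J` lying in `C`. -/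
def expOC {P : Type*} [PartialOrder P] (O C : Set P) (J : Finset P) : Option P →₀ ℕ :=
  Finsupp.single (none : Option P) 1 +
    ∑ p ∈ J, if p ∈ O ∨ (p ∈ C ∧ ∀ q ∈ J, ¬ p < q)
      then Finsupp.single (some p) 1 else 0

/-- The generator `s · y^{v_{O,C}(J)}` of the generalized Hibi ring. -/
def hibiGen {P : Type*} [PartialOrder P] (O C : Set P) (J : Finset P) :
    MvPolynomial (Option P) ℂ :=
  monomial (expOC O C J) 1

/-- The generalized Hibi ring `A_{O,C}(P,≺)`: the subalgebra of `ℂ[P][s]` generated by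
the monomials `s · y^{v_{O,C}(J)}` for all finite order ideals `J`. -/
def hibiRing {P : Type*} [PartialOrder P] (O C : Set P) :
    Subalgebra ℂ (MvPolynomial (Option P) ℂ) :=
  Algebra.adjoin ℂ
    {f | ∃ J : Finset P, (∀ a ∈ J, ∀ b, b ≤ a → b ∈ J) ∧ f = hibiGen O C J}

/-- The set of monomials `s^k · y^{v_{O,C}(J₁) + … + v_{O,C}(J_k)}` over all finite
weakly increasing tuples `J₁ ⊆ … ⊆ J_k` of finite order ideals. -/
def hibiMonomials {P : Type*} [PartialOrder P] (O C : Set P) :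
    Set (MvPolynomial (Option P) ℂ) :=
  {f | ∃ (k : ℕ) (Js : Fin k → Finset P),
    (∀ i, ∀ a ∈ Js i, ∀ b, b ≤ a → b ∈ Js i) ∧
    (∀ i j : Fin k, i ≤ j → Js i ⊆ Js j) ∧
    f = ∏ i : Fin k, hibiGen O C (Js i)}

section Straightening

variable {α M : Type*} [SemilatticeSup α] [CommMonoid M] {I : α → Prop} {e : α → M}

theorem exists_sortedGE_prod_map_eq_mul_of_straighten
    (hsup : ∀ a b, I a → I b → I (a ⊔ b))
    (hstr : ∀ a b, I a → I b → ∃ c, I c ∧ c ≤ b ∧ e a * e b = e c * e (a ⊔ b))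
    {L : List α} (hI : ∀ x ∈ L, I x) (hL : L.SortedGE) {a : α} (ha : I a) :
    ∃ L' : List α, (∀ x ∈ L', I x) ∧ L'.SortedGE ∧ (L'.map e).prod = e a * (L.map e).prod ∧
      ∀ b, a ≤ b → (∀ x ∈ L, x ≤ b) → ∀ x ∈ L', x ≤ b := by
  induction L generalizing a with
  | nil => exact ⟨[a], by simpa using ha, by simp [List.sortedGE_iff_pairwise], by simp, by simp⟩
  | cons T rest ih =>
    rw [List.forall_mem_cons] at hI
    rw [List.sortedGE_iff_pairwise, List.pairwise_cons] at hL
    obtain ⟨c, hc, hcT, hmul⟩ := hstr a T ha hI.1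
    obtain ⟨L', hI', hL', hprod, hbound⟩ := ih hI.2 hL.2.sortedGE hc
    have hL'T : ∀ x ∈ L', x ≤ T := hbound T hcT hL.1
    refine ⟨(a ⊔ T) :: L', ?_, ?_, ?_, ?_⟩
    · simpa [List.forall_mem_cons] using ⟨hsup a T ha hI.1, hI'⟩
    · rw [List.sortedGE_iff_pairwise, List.pairwise_cons]
      exact ⟨fun x hx => (hL'T x hx).trans le_sup_right, hL'.pairwise⟩
    · simp only [List.map_cons, List.prod_cons, hprod]
      rw [← mul_assoc, ← mul_assoc, hmul, mul_comm (e c)]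
    · intro b hab hb x hx
      rw [List.forall_mem_cons] at hb
      rcases List.mem_cons.1 hx with rfl | hx
      · exact sup_le hab hb.1
      · exact (hL'T x hx).trans hb.1

end Straightening

section HibiRing

variable {P : Type*} [PartialOrder P]

theorem Finset.isLowerSet_coe_iff {J : Finset P} :
    IsLowerSet (J : Set P) ↔ ∀ a ∈ J, ∀ b, b ≤ a → b ∈ J :=
  ⟨fun h _ ha _ hba => h hba ha, fun h _ _ hba ha => h _ ha _ hba⟩

theorem expOC_apply_none (O C : Set P) (J : Finset P) : expOC O C J none = 1 := by
  simp [expOC, ← Finset.sum_filter]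

theorem expOC_apply_some (O C : Set P) (J : Finset P) (p : P) :
    expOC O C J (some p) =
      if p ∈ J ∧ (p ∈ O ∨ (p ∈ C ∧ ∀ q ∈ J, ¬ p < q)) then 1 else 0 := by
  simp [expOC, ← Finset.sum_filter, Finsupp.single_apply]

theorem ite_and_add_ite_and {a b x y : Prop} (hx : ¬ a → x) (hy : ¬ b → y) :
    ((if a ∧ x then 1 else 0) + if b ∧ y then 1 else 0 : ℕ) =
      (if a ∧ b ∧ (x ∨ y) then 1 else 0) + if (a ∨ b) ∧ x ∧ y then 1 else 0 := by
  by_cases a <;> by_cases b <;> by_cases x <;> by_cases y <;> simp_all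

def straightenIdeal (O : Set P) (J J' : Finset P) : Finset P :=
  (J ∩ J').filter fun p => ∃ q ∈ J ∩ J',
    (q ∈ O ∨ (∀ r ∈ J, ¬ q < r) ∨ ∀ r ∈ J', ¬ q < r) ∧ p ≤ q

variable {O : Set P} {J J' : Finset P}

theorem straightenIdeal_subset : straightenIdeal O J J' ⊆ J ∩ J' := Finset.filter_subset _ _

theorem isLowerSet_straightenIdeal (hJ : IsLowerSet (J : Set P))
    (hJ' : IsLowerSet (J' : Set P)) :
    IsLowerSet (straightenIdeal O J J' : Set P) := by
  intro a b hba ha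
  simp only [straightenIdeal, Finset.coe_filter, Finset.mem_inter] at ha ⊢
  obtain ⟨⟨haJ, haJ'⟩, q, hq, hq', haq⟩ := ha
  exact ⟨⟨hJ hba haJ, hJ' hba haJ'⟩, q, hq, hq', hba.trans haq⟩

theorem mem_straightenIdeal_of_mem {p : P} (hp : p ∈ O) :
    p ∈ straightenIdeal O J J' ↔ p ∈ J ∧ p ∈ J' := by
  refine ⟨fun h => Finset.mem_inter.1 (straightenIdeal_subset h), fun h => ?_⟩
  simp only [straightenIdeal, Finset.mem_filter, Finset.mem_inter]
  exact ⟨h, p, h, Or.inl hp, le_rfl⟩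

theorem maximal_straightenIdeal_iff {p : P} (hp : p ∉ O) :
    (p ∈ straightenIdeal O J J' ∧ ∀ q ∈ straightenIdeal O J J', ¬ p < q) ↔
      p ∈ J ∧ p ∈ J' ∧ ((∀ q ∈ J, ¬ p < q) ∨ ∀ q ∈ J', ¬ p < q) := by
  constructor
  · rintro ⟨hpK, hmax⟩
    obtain ⟨hpJJ', q, hq, hqR, hpq⟩ := Finset.mem_filter.1 hpK
    have hqK : q ∈ straightenIdeal O J J' := Finset.mem_filter.2 ⟨hq, q, hq, hqR, le_rfl⟩
    obtain rfl : p = q := hpq.eq_or_lt.resolve_right (hmax q hqK)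
    exact ⟨(Finset.mem_inter.1 hpJJ').1, (Finset.mem_inter.1 hpJJ').2, hqR.resolve_left hp⟩
  · rintro ⟨hpJ, hpJ', hm⟩
    have hpJJ' : p ∈ J ∩ J' := Finset.mem_inter.2 ⟨hpJ, hpJ'⟩
    refine ⟨Finset.mem_filter.2 ⟨hpJJ', p, hpJJ', Or.inr hm, le_rfl⟩, fun q hq => ?_⟩
    obtain ⟨hqJ, hqJ'⟩ := Finset.mem_inter.1 (straightenIdeal_subset hq)
    exact hm.elim (· q hqJ) (· q hqJ')

theorem expOC_add_expOC (C : Set P) (hJ : IsLowerSet (J : Set P))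
    (hJ' : IsLowerSet (J' : Set P)) :
    expOC O C J + expOC O C J' = expOC O C (straightenIdeal O J J') + expOC O C (J ∪ J') := by
  ext (_ | p)
  · simp only [Finsupp.add_apply, expOC_apply_none]
  simp only [Finsupp.add_apply, expOC_apply_some]
  by_cases hpO : p ∈ O
  · simp only [hpO, true_or, and_true, mem_straightenIdeal_of_mem hpO, Finset.mem_union]
    by_cases p ∈ J <;> by_cases p ∈ J' <;> simp [*]
  · simp only [hpO, false_or]
    by_cases hpC : p ∈ C
    · have hK := maximal_straightenIdeal_iff (J := J) (J' := J') hpO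
      have hJmax : p ∉ J → ∀ q ∈ J, ¬ p < q := fun h q hq hpq => h (hJ hpq.le hq)
      have hJ'max : p ∉ J' → ∀ q ∈ J', ¬ p < q := fun h q hq hpq => h (hJ' hpq.le hq)
      simp only [hpC, true_and, Finset.mem_union, or_imp, forall_and, hK]
      convert ite_and_add_ite_and hJmax hJ'max
    · simp [hpC]

variable (O) (C : Set P)

theorem hibiGen_mul_hibiGen (hJ : IsLowerSet (J : Set P)) (hJ' : IsLowerSet (J' : Set P)) :
    hibiGen O C J * hibiGen O C J' =
      hibiGen O C (straightenIdeal O J J') * hibiGen O C (J ∪ J') := by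
  simp only [hibiGen, monomial_mul, one_mul, expOC_add_expOC C hJ hJ']

theorem prod_hibiGen_mem_hibiMonomials {L : List (Finset P)}
    (hI : ∀ J ∈ L, IsLowerSet (J : Set P)) (hL : L.SortedGE) :
    (L.map (hibiGen O C)).prod ∈ hibiMonomials O C := by
  refine ⟨L.reverse.length, L.reverse.get, fun i => ?_,
    fun _ _ hij => hL.reverse.monotone_get hij, ?_⟩
  · exact Finset.isLowerSet_coe_iff.1 (hI _ (List.mem_reverse.1 (List.get_mem _ _)))
  · rw [← List.prod_reverse, ← List.map_reverse]
    exact (Fin.prod_univ_fun_getElem _ _).symm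

theorem exists_sortedGE_prod_eq_hibiGen_mul (hJ : IsLowerSet (J : Set P)) {L : List (Finset P)}
    (hI : ∀ J ∈ L, IsLowerSet (J : Set P)) (hL : L.SortedGE) :
    ∃ L' : List (Finset P), (∀ J ∈ L', IsLowerSet (J : Set P)) ∧ L'.SortedGE ∧
      (L'.map (hibiGen O C)).prod = hibiGen O C J * (L.map (hibiGen O C)).prod := by
  obtain ⟨L', hI', hL', hprod, -⟩ := exists_sortedGE_prod_map_eq_mul_of_straighten
    (I := fun J : Finset P => IsLowerSet (J : Set P)) (e := hibiGen O C)
    (fun J J' hJ hJ' => by simpa using hJ.union hJ')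
    (fun J J' hJ hJ' => ⟨straightenIdeal O J J', isLowerSet_straightenIdeal hJ hJ',
      straightenIdeal_subset.trans Finset.inter_subset_right, hibiGen_mul_hibiGen O C hJ hJ'⟩)
    hI hL hJ
  exact ⟨L', hI', hL', hprod⟩

theorem closure_hibiGen_eq_hibiMonomials :
    (Submonoid.closure
        {f | ∃ J : Finset P, (∀ a ∈ J, ∀ b, b ≤ a → b ∈ J) ∧ f = hibiGen O C J} : Set _) =
      hibiMonomials O C := by
  refine subset_antisymm (fun f hf => ?_) ?_
  · suffices ∃ L : List (Finset P), (∀ J ∈ L, IsLowerSet (J : Set P)) ∧ L.SortedGE ∧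
        f = (L.map (hibiGen O C)).prod by
      obtain ⟨L, hI, hL, rfl⟩ := this
      exact prod_hibiGen_mem_hibiMonomials O C hI hL
    induction hf using Submonoid.closure_induction_left with
    | one => exact ⟨[], by simp, by simp [List.sortedGE_iff_pairwise], rfl⟩
    | mul_left g hg f _ ih =>
      obtain ⟨J, hJ, rfl⟩ := hg
      obtain ⟨L, hI, hL, rfl⟩ := ih
      obtain ⟨L', hI', hL', hprod⟩ :=
        exists_sortedGE_prod_eq_hibiGen_mul O C (Finset.isLowerSet_coe_iff.2 hJ) hI hL
      exact ⟨L', hI', hL', hprod.symm⟩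
  · rintro _ ⟨k, Js, hJs, -, rfl⟩
    exact Submonoid.prod_mem _ fun i _ => Submonoid.subset_closure ⟨Js i, hJs i, rfl⟩

theorem hibiMonomials_subset_range_monomial :
    hibiMonomials O C ⊆ Set.range fun u : Option P →₀ ℕ => monomial u (1 : ℂ) := by
  rintro _ ⟨k, Js, -, -, rfl⟩
  exact ⟨∑ i, expOC O C (Js i), monomial_sum_one _ _⟩

end HibiRing

theorem statement4_general {P : Type*} [PartialOrder P]
    (O C : Set P) :
    LinearIndependent ℂ
        (fun f : hibiMonomials O C => (f : MvPolynomial (Option P) ℂ)) ∧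
      Submodule.span ℂ (hibiMonomials O C) =
        Subalgebra.toSubmodule (hibiRing O C) := by
  constructor
  · have hmonomials := (basisMonomials (Option P) ℂ).linearIndependent
    rw [coe_basisMonomials] at hmonomials
    exact ((linearIndepOn_id_range_iff hmonomials.injective).2 hmonomials).mono
      (hibiMonomials_subset_range_monomial O C)
  · rw [hibiRing, Algebra.adjoin_eq_span, closure_hibiGen_eq_hibiMonomials]

/-- The monomials `s^k · y^{v_{O,C}(J₁)+…+v_{O,C}(J_k)}`, over all
finite weakly increasing tuples of finite order ideals, form a ℂ-basis of the
generalized Hibi ring `A_{O,C}(P,≺)`. -/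
theorem statement4 {P : Type*} [PartialOrder P] [Countable P]
    (O C : Set P) (hunion : O ∪ C = Set.univ) (hdisj : O ∩ C = ∅) :
    LinearIndependent ℂ
        (fun f : hibiMonomials O C => (f : MvPolynomial (Option P) ℂ)) ∧
      Submodule.span ℂ (hibiMonomials O C) =
        Subalgebra.toSubmodule (hibiRing O C) :=
  statement4_general O C
end
end

section
/- Fix integers 1 ≤ p < n. The map φ_pbw is an isomorphism of posets from (𝒥_pbw, ≺_pbw), the set of PBW tuples with the order ⪯_pbw, to the set 𝒥(Q) of order ideals of the poset (Q,≺) ordered by inclusion. -/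
/-! Order ideals of `Q` and PBW tuples are both encoded by staircases: antitone functions `r`
with values in `[p, n]` that equal `p` from row `p` on, an ideal being the set of points under
its staircase. The staircase of `φ_pbw(α)` at `a` is `max(p, max {α_j + 1 : j ≥ a, α_j ≥ p})`,
and since the large entries of a PBW tuple decrease, `α` is read back off the corners of its
staircase: `α_a = r a - 1` where `r` drops after `a`, and `α_a = a` elsewhere. -/

open scoped Classical

noncomputable section

open MvPolynomial

/-- The Plücker minor `D_I`: the determinant of the `p×p` matrix whose `j`-th column
is the `α j`-th column of the generic `p×n` matrix of variables `z_{i,j}`. -/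
def Dmin (p n : ℕ) (α : Fin p → Fin n) : MvPolynomial (Fin p × Fin n) ℂ :=
  (Matrix.of fun i j : Fin p => (X (i, α j) : MvPolynomial (Fin p × Fin n) ℂ)).det

/-- The Plücker algebra `𝒫`: the subalgebra generated by all minors `D_I`. -/
def Pluecker (p n : ℕ) : Subalgebra ℂ (MvPolynomial (Fin p × Fin n) ℂ) :=
  Algebra.adjoin ℂ (Set.range (Dmin p n))

/-- `α` is a PBW tuple (0-indexed version): the entries are pairwise distinct, entries
`< p` stand at the position equal to their value, and entries `≥ p` appear in
decreasing order. -/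
def IsPBW (p n : ℕ) (α : Fin p → Fin n) : Prop :=
  Function.Injective α ∧ (∀ j : Fin p, (α j : ℕ) < p → (α j : ℕ) = (j : ℕ)) ∧
    ∀ j k : Fin p, p ≤ (α k : ℕ) → (α k : ℕ) < (α j : ℕ) → j < k

/-- The position of the variable `z_{i,j}` in the PBW ordering of the variables: first
by row, then cyclically within the `i`-th row starting with `z_{i,i}`. -/
def rankPBW (p n : ℕ) (x : Fin p × Fin n) : ℕ :=
  (x.1 : ℕ) * n + ((x.2 : ℕ) + n - (x.1 : ℕ)) % n
/-- The poset `Q`: elements `q_{i,j}` with `1 ≤ i ≤ p` and `p+1 ≤ j ≤ n`. -/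
abbrev Qfin (p n : ℕ) := {x : ℕ × ℕ // 1 ≤ x.1 ∧ x.1 ≤ p ∧ p + 1 ≤ x.2 ∧ x.2 ≤ n}

/-- The order on `Q`: `q_{i₁,j₁} ⪯ q_{i₂,j₂}` iff `i₁ ≤ i₂` and `j₁ ≤ j₂`. -/
def qleF (p n : ℕ) (a b : Qfin p n) : Prop :=
  a.val.1 ≤ b.val.1 ∧ a.val.2 ≤ b.val.2

/-- The order ideal `φ_pbw(I)` of `Q`: for a PBW tuple `α` it is the order ideal
generated by the antichain `L = {q_{j,α_j} : α_j > p}` (i.e. the unique order ideal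
whose set of maximal elements is `L`). -/
def phiPBWset (p n : ℕ) (α : Fin p → Fin n) : Set (Qfin p n) :=
  {q | ∃ j : Fin p, p ≤ (α j : ℕ) ∧ q.val.1 ≤ (j : ℕ) + 1 ∧ q.val.2 ≤ (α j : ℕ) + 1}

/-- The order `⪯_pbw` on PBW tuples: `I ⪯_pbw I'` iff for every `k` there is `l ≥ k`
with `α'_l ≥ α_k`. -/
def pbwLeFin (p n : ℕ) (α α' : Fin p → Fin n) : Prop :=
  ∀ a : Fin p, ∃ b : Fin p, a ≤ b ∧ (α a : ℕ) ≤ (α' b : ℕ)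

lemma IsPBW.apply_le_of_le {p n : ℕ} {α : Fin p → Fin n} (hα : IsPBW p n α) {j k : Fin p}
    (hk : p ≤ (α k : ℕ)) (hkj : k ≤ j) : (α j : ℕ) ≤ α k :=
  not_lt.mp fun h => (hα.2.2 j k hk h).not_ge hkj

lemma IsPBW.apply_lt_of_lt {p n : ℕ} {α : Fin p → Fin n} (hα : IsPBW p n α) {j k : Fin p}
    (hk : p ≤ (α k : ℕ)) (hkj : k < j) : (α j : ℕ) < α k :=
  (hα.apply_le_of_le hk hkj.le).lt_of_ne fun h => hkj.ne' (hα.1 (Fin.ext h))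

namespace PBW

variable {p n : ℕ}

/-- The staircase of an order ideal of `Q` records in `r a` its largest column in row `a + 1`,
or `p` if that row is empty (rows of `Q` are 1-based, tuple positions 0-based). -/
structure IsStaircase (p n : ℕ) (r : ℕ → ℕ) : Prop where
  antitone : Antitone r
  le_apply : ∀ a, p ≤ r a
  apply_le : ∀ a, r a ≤ n
  apply_of_le : ∀ a, p ≤ a → r a = p

def underGraph (r : ℕ → ℕ) : Set (Qfin p n) :=
  {q | q.1.2 ≤ r (q.1.1 - 1)}

lemma isLowerSet_phiPBWset (α : Fin p → Fin n) : IsLowerSet (phiPBWset p n α) := by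
  rintro a b hba ⟨j, hj, h1, h2⟩
  exact ⟨j, hj, hba.1.trans h1, hba.2.trans h2⟩

def tupleProfile (α : Fin p → Fin n) (a : ℕ) : ℕ :=
  p ⊔ (Finset.univ.filter fun j : Fin p => a ≤ (j : ℕ) ∧ p ≤ (α j : ℕ)).sup
    fun j => (α j : ℕ) + 1

lemma le_tupleProfile_iff {α : Fin p → Fin n} {a x : ℕ} (hx : p < x) :
    x ≤ tupleProfile α a ↔ ∃ j : Fin p, a ≤ (j : ℕ) ∧ p ≤ (α j : ℕ) ∧ x ≤ (α j : ℕ) + 1 := by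
  rw [tupleProfile, le_sup_iff, Finset.le_sup_iff (by simp; omega)]
  simp only [Finset.mem_filter, Finset.mem_univ, true_and, and_assoc, not_le.mpr hx, false_or]

lemma tupleProfile_le_iff {α : Fin p → Fin n} {a x : ℕ} :
    tupleProfile α a ≤ x ↔
      p ≤ x ∧ ∀ j : Fin p, a ≤ (j : ℕ) → p ≤ (α j : ℕ) → (α j : ℕ) + 1 ≤ x := by
  simp only [tupleProfile, sup_le_iff, Finset.sup_le_iff, Finset.mem_filter, Finset.mem_univ,
    true_and, and_imp]

lemma isStaircase_tupleProfile (hpn : p ≤ n) (α : Fin p → Fin n) :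
    IsStaircase p n (tupleProfile α) where
  antitone a b hab := tupleProfile_le_iff.mpr ⟨le_sup_left, fun j hj hjp =>
    (le_tupleProfile_iff (by omega)).mpr ⟨j, hab.trans hj, hjp, le_rfl⟩⟩
  le_apply _ := le_sup_left
  apply_le _ := tupleProfile_le_iff.mpr ⟨hpn, fun j _ _ => (α j).isLt⟩
  apply_of_le a ha := le_antisymm
    (tupleProfile_le_iff.mpr ⟨le_rfl, fun j hj _ => absurd (hj.trans_lt j.isLt) ha.not_gt⟩)
    le_sup_left

lemma phiPBWset_eq_underGraph (α : Fin p → Fin n) :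
    phiPBWset p n α = underGraph (tupleProfile α) := by
  ext ⟨⟨i, j⟩, hi, -, hj, -⟩
  simp only [phiPBWset, underGraph, Set.mem_ofPred_eq, le_tupleProfile_iff (show p < j by omega)]
  refine exists_congr fun k => ?_
  omega

lemma tupleProfile_of_le_apply {α : Fin p → Fin n} (hα : IsPBW p n α) {a : Fin p}
    (ha : p ≤ (α a : ℕ)) : tupleProfile α a = (α a : ℕ) + 1 :=
  le_antisymm
    (tupleProfile_le_iff.mpr ⟨by omega, fun j hj _ => by
      have := hα.apply_le_of_le ha (Fin.le_def.mpr hj); omega⟩)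
    ((le_tupleProfile_iff (by omega)).mpr ⟨a, le_rfl, ha, le_rfl⟩)

lemma tupleProfile_succ_le {α : Fin p → Fin n} (hα : IsPBW p n α) {a : Fin p}
    (ha : p ≤ (α a : ℕ)) : tupleProfile α (a + 1) ≤ α a :=
  tupleProfile_le_iff.mpr ⟨ha, fun j hj _ => by
    have := hα.apply_lt_of_lt ha (Fin.lt_def.mpr hj); omega⟩

lemma tupleProfile_succ_of_apply_lt {α : Fin p → Fin n} {a : Fin p}
    (ha : (α a : ℕ) < p) : tupleProfile α (a + 1) = tupleProfile α a := by
  refine le_antisymm (tupleProfile_le_iff.mpr ⟨le_sup_left, fun j hj hjp => ?_⟩)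
    (tupleProfile_le_iff.mpr ⟨le_sup_left, fun j hj hjp => ?_⟩)
  · exact (le_tupleProfile_iff (by omega)).mpr ⟨j, by omega, hjp, le_rfl⟩
  · have hja : j ≠ a := by rintro rfl; omega
    exact (le_tupleProfile_iff (by omega)).mpr
      ⟨j, by have := Fin.val_ne_of_ne hja; omega, hjp, le_rfl⟩

def idealProfile (S : Set (Qfin p n)) (a : ℕ) : ℕ :=
  p ⊔ (Finset.univ.filter fun j : Fin (n + 1) => ∃ q ∈ S, q.1 = (a + 1, (j : ℕ))).sup
    fun j => (j : ℕ)

lemma le_idealProfile_iff {S : Set (Qfin p n)} {a x : ℕ} (hx : p < x) :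
    x ≤ idealProfile S a ↔ ∃ q ∈ S, q.1.1 = a + 1 ∧ x ≤ q.1.2 := by
  rw [idealProfile, le_sup_iff, Finset.le_sup_iff (by simp; omega)]
  simp only [Finset.mem_filter, Finset.mem_univ, true_and, not_le.mpr hx, false_or]
  constructor
  · rintro ⟨j, ⟨q, hq, hqj⟩, hxj⟩
    exact ⟨q, hq, by simp [hqj], by simp [hqj, hxj]⟩
  · rintro ⟨q, hq, hqa, hxq⟩
    exact ⟨⟨q.1.2, by have := q.2; omega⟩, ⟨q, hq, Prod.ext hqa rfl⟩, hxq⟩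

lemma idealProfile_le_iff {S : Set (Qfin p n)} {a x : ℕ} :
    idealProfile S a ≤ x ↔ p ≤ x ∧ ∀ q ∈ S, q.1.1 = a + 1 → q.1.2 ≤ x := by
  simp only [idealProfile, sup_le_iff, Finset.sup_le_iff, Finset.mem_filter, Finset.mem_univ,
    true_and]
  refine and_congr_right fun _ => ⟨fun h q hq hqa => ?_, ?_⟩
  · exact h ⟨q.1.2, by have := q.2; omega⟩ ⟨q, hq, Prod.ext hqa rfl⟩
  · rintro h j ⟨q, hq, hqj⟩
    simpa [hqj] using h q hq (by simp [hqj])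

lemma isStaircase_idealProfile (hpn : p ≤ n) {S : Set (Qfin p n)} (hS : IsLowerSet S) :
    IsStaircase p n (idealProfile S) where
  antitone a b hab := by
    refine idealProfile_le_iff.mpr ⟨le_sup_left, fun q hq hqb => ?_⟩
    by_cases hqp : q.1.2 ≤ p
    · exact hqp.trans le_sup_left
    let q' : Qfin p n := ⟨(a + 1, q.1.2), by have := q.2; omega⟩
    have hq' : q' ∈ S := hS (show q' ≤ q from ⟨by simp [q']; omega, le_rfl⟩) hq
    exact (le_idealProfile_iff (not_le.mp hqp)).mpr ⟨q', hq', rfl, le_rfl⟩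
  le_apply _ := le_sup_left
  apply_le _ := idealProfile_le_iff.mpr ⟨hpn, fun q _ _ => q.2.2.2.2⟩
  apply_of_le a ha := le_antisymm
    (idealProfile_le_iff.mpr ⟨le_rfl, fun q _ hqa => by have := q.2; omega⟩) le_sup_left

lemma underGraph_idealProfile {S : Set (Qfin p n)} (hS : IsLowerSet S) :
    underGraph (idealProfile S) = S := by
  ext q
  have hq := q.2
  simp only [underGraph, Set.mem_ofPred_eq, le_idealProfile_iff (show p < q.1.2 by omega)]
  constructor
  · rintro ⟨q', hq', hrow, hcol⟩
    exact hS ⟨by omega, hcol⟩ hq'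
  · exact fun hqS => ⟨q, hqS, by omega, le_rfl⟩

lemma idealProfile_underGraph {r : ℕ → ℕ} (hr : IsStaircase p n r) :
    idealProfile (underGraph r : Set (Qfin p n)) = r := by
  funext a
  refine le_antisymm (idealProfile_le_iff.mpr ⟨hr.le_apply a, fun q hq hqa => ?_⟩) ?_
  · simpa [underGraph, hqa] using hq
  rcases (hr.le_apply a).eq_or_lt with hra | hra
  · exact hra ▸ le_sup_left
  have hap : a < p := not_le.mp fun h => hra.ne' (hr.apply_of_le a h)
  let q : Qfin p n := ⟨(a + 1, r a), by have := hr.apply_le a; omega⟩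
  exact (le_idealProfile_iff hra).mpr ⟨q, by simp [underGraph, q], rfl, le_rfl⟩

lemma IsStaircase.exists_corner {r : ℕ → ℕ} (hr : IsStaircase p n r) {a : ℕ} (ha : p < r a) :
    ∃ j, a ≤ j ∧ r (j + 1) < r j ∧ r a ≤ r j := by
  have hap : a < p := not_le.mp fun h => ha.ne' (hr.apply_of_le a h)
  set j := Nat.findGreatest (fun k => r a ≤ r k) p
  have hrj : r a ≤ r j := Nat.findGreatest_spec (P := fun k => r a ≤ r k) hap.le le_rfl
  have hjp : j < p := not_le.mp fun h => by have := hr.apply_of_le j h; omega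
  refine ⟨j, Nat.le_findGreatest hap.le le_rfl, ?_, hrj⟩
  have hnext : ¬ r a ≤ r (j + 1) :=
    Nat.findGreatest_is_greatest (P := fun k => r a ≤ r k) (Nat.lt_succ_self j) hjp
  omega

def cornerTuple {r : ℕ → ℕ} (hr : IsStaircase p n r) (a : Fin p) : Fin n :=
  if h : r (a + 1) < r a then ⟨r a - 1, by have := hr.apply_le a; omega⟩
  else ⟨a, by have := a.isLt; have := hr.le_apply 0; have := hr.apply_le 0; omega⟩

section cornerTuple

variable {r : ℕ → ℕ} (hr : IsStaircase p n r)

lemma cornerTuple_of_lt {a : Fin p} (ha : r (a + 1) < r a) :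
    (cornerTuple hr a : ℕ) = r a - 1 := by
  simp [cornerTuple, ha]

lemma cornerTuple_of_not_lt {a : Fin p} (ha : ¬ r (a + 1) < r a) :
    (cornerTuple hr a : ℕ) = a := by
  simp [cornerTuple, ha]

lemma le_cornerTuple_iff {a : Fin p} : p ≤ (cornerTuple hr a : ℕ) ↔ r (a + 1) < r a := by
  by_cases ha : r (a + 1) < r a
  · simp only [cornerTuple_of_lt hr ha, ha, iff_true]
    have := hr.le_apply (a + 1)
    omega
  · simp only [cornerTuple_of_not_lt hr ha, ha, iff_false, not_le, a.isLt]

lemma cornerTuple_lt_of_lt {j k : Fin p} (hk : p ≤ (cornerTuple hr k : ℕ)) (hkj : k < j) :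
    (cornerTuple hr j : ℕ) < cornerTuple hr k := by
  have hk' := (le_cornerTuple_iff hr).mp hk
  have := hr.le_apply (k + 1)
  rw [cornerTuple_of_lt hr hk']
  by_cases hj : r (j + 1) < r j
  · have := hr.antitone (show (k : ℕ) + 1 ≤ j from hkj)
    rw [cornerTuple_of_lt hr hj]
    omega
  · rw [cornerTuple_of_not_lt hr hj]
    omega

lemma isPBW_cornerTuple : IsPBW p n (cornerTuple hr) := by
  have small {j : Fin p} (hj : (cornerTuple hr j : ℕ) < p) : (cornerTuple hr j : ℕ) = j :=
    cornerTuple_of_not_lt hr fun h => hj.not_ge ((le_cornerTuple_iff hr).mpr h)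
  refine ⟨fun j k hjk => ?_, fun j => small, fun j k hk hkj => ?_⟩
  · by_cases hj : (cornerTuple hr j : ℕ) < p
    · have hk : (cornerTuple hr k : ℕ) < p := hjk ▸ hj
      exact Fin.ext ((small hj).symm.trans (hjk ▸ small hk))
    · rcases lt_trichotomy j k with h | h | h
      · exact absurd (congrArg Fin.val hjk) (cornerTuple_lt_of_lt hr (not_lt.mp hj) h).ne'
      · exact h
      · exact absurd (congrArg Fin.val hjk) (cornerTuple_lt_of_lt hr (hjk ▸ not_lt.mp hj) h).ne
  · exact lt_of_not_ge fun h => (h.eq_or_lt).elim (fun h => by subst h; omega)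
      fun h => (cornerTuple_lt_of_lt hr hk h).not_gt hkj

lemma tupleProfile_cornerTuple : tupleProfile (cornerTuple hr) = r := by
  funext a
  refine le_antisymm (tupleProfile_le_iff.mpr ⟨hr.le_apply a, fun j hj hjp => ?_⟩) ?_
  · have hj' := (le_cornerTuple_iff hr).mp hjp
    have := hr.antitone hj
    rw [cornerTuple_of_lt hr hj']
    omega
  rcases (hr.le_apply a).eq_or_lt with hra | hra
  · exact hra ▸ le_sup_left
  obtain ⟨j, haj, hcorner, hrj⟩ := hr.exists_corner hra
  have hjp : j < p := not_le.mp fun h => by have := hr.apply_of_le j h; omega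
  refine (le_tupleProfile_iff hra).mpr ⟨⟨j, hjp⟩, haj, (le_cornerTuple_iff hr).mpr hcorner, ?_⟩
  rw [cornerTuple_of_lt hr hcorner]
  dsimp only
  omega

end cornerTuple

lemma cornerTuple_tupleProfile (hpn : p ≤ n) {α : Fin p → Fin n} (hα : IsPBW p n α) :
    cornerTuple (isStaircase_tupleProfile hpn α) = α := by
  funext a
  apply Fin.ext
  by_cases ha : p ≤ (α a : ℕ)
  · have hcorner := tupleProfile_succ_le hα ha
    have hvalue := tupleProfile_of_le_apply hα ha
    rw [cornerTuple_of_lt _ (by omega), hvalue, Nat.add_sub_cancel]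
  · rw [not_le] at ha
    rw [cornerTuple_of_not_lt _ (tupleProfile_succ_of_apply_lt ha).not_lt, hα.2.1 a ha]

lemma eq_of_phiPBWset_eq (hpn : p ≤ n) {α α' : Fin p → Fin n} (hα : IsPBW p n α)
    (hα' : IsPBW p n α') (h : phiPBWset p n α = phiPBWset p n α') : α = α' := by
  have hprofile : tupleProfile α = tupleProfile α' := by
    rw [← idealProfile_underGraph (isStaircase_tupleProfile hpn α),
      ← idealProfile_underGraph (isStaircase_tupleProfile hpn α'),
      ← phiPBWset_eq_underGraph, ← phiPBWset_eq_underGraph, h]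
  rw [← cornerTuple_tupleProfile hpn hα, ← cornerTuple_tupleProfile hpn hα']
  congr 1

lemma exists_phiPBWset_eq (hpn : p ≤ n) {S : Set (Qfin p n)} (hS : IsLowerSet S) :
    ∃ α : Fin p → Fin n, IsPBW p n α ∧ phiPBWset p n α = S :=
  ⟨_, isPBW_cornerTuple (isStaircase_idealProfile hpn hS), by
    rw [phiPBWset_eq_underGraph, tupleProfile_cornerTuple, underGraph_idealProfile hS]⟩

lemma pbwLeFin_iff_phiPBWset_subset {α α' : Fin p → Fin n} (hα : IsPBW p n α)
    (hα' : IsPBW p n α') : pbwLeFin p n α α' ↔ phiPBWset p n α ⊆ phiPBWset p n α' := by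
  refine ⟨fun hle q ⟨j, hj, hrow, hcol⟩ => ?_, fun hsub a => ?_⟩
  · obtain ⟨k, hjk, hk⟩ := hle j
    exact ⟨k, hj.trans hk, hrow.trans (by simpa using hjk), hcol.trans (by omega)⟩
  by_cases ha : p ≤ (α a : ℕ)
  · let q : Qfin p n :=
      ⟨((a : ℕ) + 1, (α a : ℕ) + 1), by have := a.isLt; have := (α a).isLt; omega⟩
    obtain ⟨k, -, hrow, hcol⟩ := hsub (show q ∈ phiPBWset p n α from ⟨a, ha, le_rfl, le_rfl⟩)
    exact ⟨k, Fin.le_def.mpr (by simpa [q] using hrow), by simpa [q] using hcol⟩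
  · refine ⟨a, le_rfl, ?_⟩
    rw [hα.2.1 a (not_le.mp ha)]
    by_cases ha' : (α' a : ℕ) < p
    · rw [hα'.2.1 a ha']
    · omega

end PBW

theorem statement7_general (p n : ℕ) (hpn : p < n) :
    (∀ α : Fin p → Fin n, IsPBW p n α →
        ∀ a ∈ phiPBWset p n α, ∀ b, qleF p n b a → b ∈ phiPBWset p n α) ∧
      (∀ α α' : Fin p → Fin n, IsPBW p n α → IsPBW p n α' →
        phiPBWset p n α = phiPBWset p n α' → α = α') ∧
      (∀ S : Set (Qfin p n), (∀ a ∈ S, ∀ b, qleF p n b a → b ∈ S) →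
        ∃ α : Fin p → Fin n, IsPBW p n α ∧ phiPBWset p n α = S) ∧
      (∀ α α' : Fin p → Fin n, IsPBW p n α → IsPBW p n α' →
        (pbwLeFin p n α α' ↔ phiPBWset p n α ⊆ phiPBWset p n α')) :=
  ⟨fun α _ _ ha _ hba => PBW.isLowerSet_phiPBWset α hba ha,
    fun _ _ hα hα' => PBW.eq_of_phiPBWset_eq hpn.le hα hα',
    fun _ hS => PBW.exists_phiPBWset_eq hpn.le fun a _ hba ha => hS a ha _ hba,
    fun _ _ => PBW.pbwLeFin_iff_phiPBWset_subset⟩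

/-- `φ_pbw` is an isomorphism of posets from the set of PBW tuples
with the order `⪯_pbw` onto the set of order ideals of `(Q,≺)` ordered by
inclusion. -/
theorem statement7 (p n : ℕ) (hp : 1 ≤ p) (hpn : p < n) :
    (∀ α : Fin p → Fin n, IsPBW p n α →
        ∀ a ∈ phiPBWset p n α, ∀ b, qleF p n b a → b ∈ phiPBWset p n α) ∧
      (∀ α α' : Fin p → Fin n, IsPBW p n α → IsPBW p n α' →
        phiPBWset p n α = phiPBWset p n α' → α = α') ∧
      (∀ S : Set (Qfin p n), (∀ a ∈ S, ∀ b, qleF p n b a → b ∈ S) →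
        ∃ α : Fin p → Fin n, IsPBW p n α ∧ phiPBWset p n α = S) ∧
      (∀ α α' : Fin p → Fin n, IsPBW p n α → IsPBW p n α' →
        (pbwLeFin p n α α' ↔ phiPBWset p n α ⊆ phiPBWset p n α')) :=
  statement7_general p n hpn
end
end

section
/- Fix integers 1 ≤ p < n. The map φ_ss is a bijection from the set Ĩ_ss of pairs I^{(k)} (I a strictly increasing p-tuple in [1,n], k ∈ ℕ₀) to the set 𝒥(Q̃) of finite order ideals of the poset (Q̃,≺). -/
open scoped Classical

noncomputable section

open MvPolynomial

/-- The poset `Q̃`: elements `q_{i,j}` with `i ≥ 1`, `j ≥ p+1` and `j − i ∈ [0, n−1]`. -/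
abbrev Qt (p n : ℕ) :=
  {x : ℕ × ℕ // 1 ≤ x.1 ∧ p + 1 ≤ x.2 ∧ x.1 ≤ x.2 ∧ x.2 + 1 ≤ x.1 + n}

/-- The order relation of `Q̃` on raw pairs: `(i₁,j₁) ⪯ (i₂,j₂)` iff
(i) `i₁ ≤ i₂` and `j₁ ≤ j₂`, or (ii) `i₁ + p ≤ i₂`, or (iii) `j₁ + n − p ≤ j₂`. -/
def qleN (p n : ℕ) (a b : ℕ × ℕ) : Prop :=
  (a.1 ≤ b.1 ∧ a.2 ≤ b.2) ∨ a.1 + p ≤ b.1 ∨ a.2 + (n - p) ≤ b.2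

/-- The order `⪯` on `Q̃`. -/
def qleT (p n : ℕ) (a b : Qt p n) : Prop := qleN p n a.val b.val

/-- The order ideal `φ_ss(I^{(k)}) ⊆ Q̃`: all `q_{i,j}` with `i ≤ k` and, for each
`i ∈ [k+1, k+p]`, those `q_{i,j}` with `j ≤ i + α_{p+1−(i−k)} − 1`. -/
def phiSS (p n : ℕ) (α : Fin p → Fin n) (k : ℕ) : Set (Qt p n) :=
  {q | q.val.1 ≤ k ∨ ∃ t : Fin p, q.val.1 = k + 1 + (t : ℕ) ∧
    q.val.2 ≤ q.val.1 + (α ⟨p - 1 - (t : ℕ), by have := t.isLt; omega⟩ : ℕ)}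

/-!
A finite order ideal `S` of `Q̃` is a staircase: by (i) each row `i` of `S` (the elements
`q_{i,j}`) is an initial segment, ending at some column `r_i`, and by (ii) every row at least `p`
below the top row `M` is full. So `S` is determined by `k = M - p` and the ends of the last `p`
rows, and `φ_ss(I^{(k)})` is exactly this picture with `r_i = i + α_{k+p-i}`. Going down one row
inside this band the end cannot drop, since an element `q_{i,i+n-1}` on the last diagonal
dominates, by (iii), the element `q_{i+p-1,i+p-1}` above the top row; hence `α` is strictly
increasing. Conversely, strict monotonicity of `α`, through `s ≤ α_s` and `α_s + p - s ≤ n`, is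
what makes `φ_ss(I^{(k)})` closed under (i)–(iii).
-/

section StrictMonoFin

variable {p n : ℕ} {α : Fin p → Fin n}

lemma StrictMono.val_add_sub_le (hα : StrictMono α) {a b : Fin p} (hab : a ≤ b) :
    (α a : ℕ) + (b - a) ≤ α b := by
  have hsub : (Finset.Icc a b).image (fun s => (α s : ℕ)) ⊆ Finset.Icc (α a : ℕ) (α b) := by
    intro x hx
    obtain ⟨s, hs, rfl⟩ := Finset.mem_image.1 hx
    rw [Finset.mem_Icc] at hs ⊢
    exact ⟨hα.monotone hs.1, hα.monotone hs.2⟩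
  have hcard := Finset.card_le_card hsub
  rw [Finset.card_image_of_injective (f := fun s => (α s : ℕ)) _
    (Fin.val_injective.comp hα.injective), Fin.card_Icc, Nat.card_Icc] at hcard
  have : (a : ℕ) ≤ b := hab
  omega

lemma StrictMono.val_le_val_apply (hα : StrictMono α) (s : Fin p) : (s : ℕ) ≤ α s := by
  have := hα.val_add_sub_le (show (⟨0, s.pos⟩ : Fin p) ≤ s from Fin.le_def.2 (Nat.zero_le _))
  simp only at this
  omega

lemma StrictMono.val_apply_add_le (hα : StrictMono α) (s : Fin p) : (α s : ℕ) + (p - s) ≤ n := by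
  have hs := s.isLt
  have := hα.val_add_sub_le (show s ≤ ⟨p - 1, by omega⟩ from Fin.le_def.2 (by simp; omega))
  have := (α ⟨p - 1, by omega⟩).isLt
  simp only at *
  omega

end StrictMonoFin

section PhiSS

variable {p n : ℕ}

def IsQtLowerSet (S : Set (Qt p n)) : Prop := ∀ a ∈ S, ∀ b, qleT p n b a → b ∈ S

lemma Qt.finite_setOf_fst_le (m : ℕ) : {q : Qt p n | q.val.1 ≤ m}.Finite := by
  refine (((Set.finite_Iic m).prod (Set.finite_Iic (m + n))).preimage
    Subtype.val_injective.injOn).subset ?_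
  rintro ⟨⟨i, j⟩, hq⟩ (hi : i ≤ m)
  simp only [Set.mem_preimage, Set.mem_prod, Set.mem_Iic]
  omega

variable {α : Fin p → Fin n} {k : ℕ}

lemma mem_phiSS_iff {q : Qt p n} : q ∈ phiSS p n α k ↔
    q.val.1 ≤ k ∨ ∃ s : Fin p, q.val.1 + s = k + p ∧ q.val.2 ≤ q.val.1 + α s := by
  refine or_congr_right (Fin.revPerm.exists_congr fun t => ?_)
  have hrev : (⟨p - 1 - t, by omega⟩ : Fin p) = Fin.revPerm t := Fin.ext (by simp; omega)
  rw [hrev, Fin.revPerm_apply, Fin.val_rev]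
  exact and_congr_left fun _ => by omega

lemma fst_le_of_mem_phiSS {q : Qt p n} (hq : q ∈ phiSS p n α k) : q.val.1 ≤ k + p := by
  rcases mem_phiSS_iff.1 hq with h | ⟨s, hs, -⟩ <;> omega

lemma snd_le_of_mem_phiSS (hα : StrictMono α) {q : Qt p n} (hq : q ∈ phiSS p n α k) :
    q.val.2 ≤ k + n := by
  have := q.prop
  rcases mem_phiSS_iff.1 hq with h | ⟨s, hs, hj⟩
  · omega
  · have := hα.val_apply_add_le s
    omega

lemma finite_phiSS : (phiSS p n α k).Finite :=
  (Qt.finite_setOf_fst_le (k + p)).subset fun _ => fst_le_of_mem_phiSS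

lemma isQtLowerSet_phiSS (hα : StrictMono α) : IsQtLowerSet (phiSS p n α k) := by
  intro a ha b hba
  have hi₂ := fst_le_of_mem_phiSS ha
  have hj₂ := snd_le_of_mem_phiSS hα ha
  have hb := b.prop
  have hpn : p ≤ n := by simpa using Fintype.card_le_of_injective α hα.injective
  simp only [qleT, qleN] at hba
  refine mem_phiSS_iff.2 (or_iff_not_imp_left.2 fun hik => ?_)
  have hi₁ : b.val.1 ≤ k + p := by omega
  obtain ⟨s₁, hs₁⟩ : ∃ s₁ : Fin p, (s₁ : ℕ) = k + p - b.val.1 := ⟨⟨_, by omega⟩, rfl⟩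
  have hα₁ := hα.val_le_val_apply s₁
  refine ⟨s₁, by omega, ?_⟩
  rcases hba with ⟨hi, hj⟩ | h | h
  · rcases mem_phiSS_iff.1 ha with h | ⟨s₂, hs₂, hj₂⟩
    · omega
    · have := hα.val_add_sub_le (show s₂ ≤ s₁ from Fin.le_def.2 (by omega))
      omega
  · omega
  · omega

end PhiSS

section Injective

variable {p n : ℕ} {α α' : Fin p → Fin n}

lemma le_of_phiSS_eq (hn : 0 < n) {k k' : ℕ} (h : phiSS p n α k = phiSS p n α' k') : k ≤ k' := by
  by_contra! hlt
  obtain ⟨q, hq₁, hq₂⟩ : ∃ q : Qt p n, q.val.1 = k' + p + 1 ∧ q.val.2 = k' + p + 1 :=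
    ⟨⟨(_, _), by omega⟩, rfl, rfl⟩
  have hq : q ∈ phiSS p n α k :=
    mem_phiSS_iff.2 (or_iff_not_imp_left.2 fun hk => ⟨⟨k - k' - 1, by omega⟩, by simp; omega,
      by omega⟩)
  have := fst_le_of_mem_phiSS (h ▸ hq)
  omega

lemma val_apply_le_of_phiSS_eq (hα : StrictMono α) {k : ℕ} (h : phiSS p n α k = phiSS p n α' k)
    (s : Fin p) : (α' s : ℕ) ≤ α s := by
  have hs := hα.val_le_val_apply s
  by_contra! hlt
  have := (α' s).isLt
  obtain ⟨q, hq₁, hq₂⟩ : ∃ q : Qt p n, q.val.1 = k + p - s ∧ q.val.2 = k + p - s + α' s :=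
    ⟨⟨(_, _), by omega⟩, rfl, rfl⟩
  have hq : q ∈ phiSS p n α' k := mem_phiSS_iff.2 (Or.inr ⟨s, by omega, by omega⟩)
  rcases mem_phiSS_iff.1 (h ▸ hq) with hk | ⟨t, ht, hj⟩
  · omega
  · obtain rfl : t = s := Fin.ext (by omega)
    omega

lemma phiSS_injective (hn : 0 < n) (hα : StrictMono α) (hα' : StrictMono α') {k k' : ℕ}
    (h : phiSS p n α k = phiSS p n α' k') : α = α' ∧ k = k' := by
  obtain rfl := (le_of_phiSS_eq hn h).antisymm (le_of_phiSS_eq hn h.symm)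
  exact ⟨funext fun s => Fin.ext ((val_apply_le_of_phiSS_eq hα' h.symm s).antisymm
    (val_apply_le_of_phiSS_eq hα h s)), rfl⟩

end Injective

section Surjective

variable {p n : ℕ} (T : Finset (Qt p n))

def topRow : ℕ := T.sup fun q => q.val.1

-- An empty row ends at `p`, just left of the first column `p + 1`.
def rowEnd (i : ℕ) : ℕ := p ⊔ (T.filter fun q => q.val.1 = i).sup fun q => q.val.2

variable {T}

lemma fst_le_topRow {q : Qt p n} (hq : q ∈ T) : q.val.1 ≤ topRow T :=
  Finset.le_sup (f := fun q : Qt p n => q.val.1) hq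

lemma snd_le_rowEnd {q : Qt p n} (hq : q ∈ T) : q.val.2 ≤ rowEnd T q.val.1 :=
  le_sup_of_le_right <|
    Finset.le_sup (f := fun q : Qt p n => q.val.2) (Finset.mem_filter.2 ⟨hq, rfl⟩)

lemma rowEnd_of_topRow_lt {i : ℕ} (hi : topRow T < i) : rowEnd T i = p :=
  sup_eq_left.2 <| Finset.sup_le fun q hq => by
    have := fst_le_topRow (Finset.mem_filter.1 hq).1
    have := (Finset.mem_filter.1 hq).2
    omega

lemma rowEnd_lt_add (hpn : p < n) (i : ℕ) : rowEnd T i < i + n :=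
  max_lt (by omega) <| (Finset.sup_lt_iff (by simp; omega)).2 fun q hq => by
    have := q.prop
    have := (Finset.mem_filter.1 hq).2
    omega

variable (hT : IsQtLowerSet (T : Set (Qt p n)))
include hT

lemma exists_mem_val_eq_rowEnd (hpn : p < n) {i : ℕ} (hi₀ : 1 ≤ i) (hi : i ≤ topRow T) :
    ∃ q ∈ T, q.val = (i, rowEnd T i) := by
  have hne : T.Nonempty := by
    by_contra h
    simp [Finset.not_nonempty_iff_eq_empty.1 h, topRow] at hi
    omega
  obtain ⟨a, haT, ha⟩ := Finset.exists_mem_eq_sup T hne fun q => q.val.1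
  change topRow T = a.val.1 at ha
  have := a.prop
  have hr : (⟨(i, max i (p + 1)), by omega⟩ : Qt p n) ∈ T :=
    hT a haT _ (Or.inl ⟨by simp only; omega, by simp only; omega⟩)
  obtain ⟨q, hq, hq₂⟩ := Finset.exists_mem_eq_sup (T.filter fun q => q.val.1 = i)
    ⟨_, Finset.mem_filter.2 ⟨hr, rfl⟩⟩ fun q => q.val.2
  obtain ⟨hqT, hq₁⟩ := Finset.mem_filter.1 hq
  have := q.prop
  refine ⟨q, hqT, Prod.ext hq₁ ?_⟩
  change q.val.2 = p ⊔ _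
  rw [hq₂]
  exact (max_eq_right (by omega)).symm

lemma mem_iff_le_rowEnd (hpn : p < n) {q : Qt p n} :
    q ∈ T ↔ q.val.1 ≤ topRow T ∧ q.val.2 ≤ rowEnd T q.val.1 := by
  refine ⟨fun hq => ⟨fst_le_topRow hq, snd_le_rowEnd hq⟩, fun ⟨h₁, h₂⟩ => ?_⟩
  obtain ⟨r, hr, hrv⟩ := exists_mem_val_eq_rowEnd hT hpn q.prop.1 h₁
  exact hT r hr q (Or.inl (by rw [hrv]; exact ⟨le_rfl, h₂⟩))

lemma mem_of_add_le_topRow (hpn : p < n) {q : Qt p n} (hq : q.val.1 + p ≤ topRow T) : q ∈ T := by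
  obtain ⟨r, hr, hrv⟩ := exists_mem_val_eq_rowEnd hT hpn (by omega) le_rfl
  exact hT r hr q (Or.inr (Or.inl (by rw [hrv]; exact hq)))

lemma rowEnd_antitoneOn (hpn : p < n) : AntitoneOn (rowEnd T) {i | topRow T - p + 1 ≤ i} := by
  refine antitoneOn_nat_Ici_of_succ_le fun i hi => ?_
  by_cases htop : topRow T < i + 1
  · rw [rowEnd_of_topRow_lt htop]
    exact le_sup_left
  obtain ⟨q, hq, hqv⟩ := exists_mem_val_eq_rowEnd hT hpn (by omega) (not_lt.1 htop)
  have hqv' := q.prop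
  rw [hqv] at hqv'
  simp only at hqv'
  -- on the last diagonal, `q` would dominate `q_{i+p,i+p}` above the top row by (iii)
  have hend : rowEnd T (i + 1) + 1 < i + 1 + n := by
    by_contra hlast
    have := fst_le_topRow (hT q hq ⟨(i + p, i + p), by omega⟩
      (Or.inr (Or.inr (by rw [hqv]; simp only; omega))))
    simp only at this
    omega
  exact snd_le_rowEnd (hT q hq ⟨(i, rowEnd T (i + 1)), by omega⟩
    (Or.inl (by rw [hqv]; simp only; omega)))

lemma le_rowEnd (hpn : p < n) {i : ℕ} (hi₀ : 1 ≤ i) (hi : i ≤ topRow T - p + p) :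
    i ≤ rowEnd T i := by
  by_cases hiM : i ≤ topRow T
  · obtain ⟨q, -, hqv⟩ := exists_mem_val_eq_rowEnd hT hpn hi₀ hiM
    have := q.prop
    rw [hqv] at this
    exact this.2.2.1
  · exact le_sup_of_le_left (by omega)

lemma exists_phiSS_eq (hpn : p < n) :
    ∃ (α : Fin p → Fin n) (k : ℕ), StrictMono α ∧ phiSS p n α k = T := by
  set k := topRow T - p
  have hlt (s : Fin p) : rowEnd T (k + p - s) - (k + p - s) < n := by
    have := rowEnd_lt_add (T := T) hpn (k + p - s)
    omega
  refine ⟨fun s => ⟨_, hlt s⟩, k, fun a b hab => ?_, ?_⟩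
  · have hab' : (a : ℕ) < b := hab
    have hb := b.isLt
    have hanti := rowEnd_antitoneOn hT hpn (a := k + p - b) (b := k + p - a)
      (show k + 1 ≤ k + p - b by omega) (show k + 1 ≤ k + p - a by omega) (by omega)
    have := le_rowEnd hT hpn (i := k + p - a) (by omega) (by omega)
    exact Fin.lt_def.2 (by simp only; omega)
  · ext q
    have hq := q.prop
    rw [mem_phiSS_iff, Finset.mem_coe]
    constructor
    · rintro (hik | ⟨s, hs, hj⟩)
      · exact mem_of_add_le_topRow hT hpn (by omega)
      · simp only at hj
        rw [show k + p - s = q.val.1 by omega] at hj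
        by_cases hiM : q.val.1 ≤ topRow T
        · have := le_rowEnd hT hpn hq.1 (by omega)
          exact (mem_iff_le_rowEnd hT hpn).2 ⟨hiM, by omega⟩
        · rw [rowEnd_of_topRow_lt (by omega)] at hj
          omega
    · intro hqT
      obtain ⟨hiM, hj⟩ := (mem_iff_le_rowEnd hT hpn).1 hqT
      refine or_iff_not_imp_left.2 fun hik => ⟨⟨k + p - q.val.1, by omega⟩, by simp only; omega, ?_⟩
      simp only
      rw [show k + p - (k + p - q.val.1) = q.val.1 by omega]
      omega

end Surjective

theorem statement11_general (p n : ℕ) (hpn : p < n) :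
    (∀ (α : Fin p → Fin n) (k : ℕ), StrictMono α →
        (phiSS p n α k).Finite ∧
          (∀ a ∈ phiSS p n α k, ∀ b, qleT p n b a → b ∈ phiSS p n α k)) ∧
      (∀ (α α' : Fin p → Fin n) (k k' : ℕ), StrictMono α → StrictMono α' →
        phiSS p n α k = phiSS p n α' k' → α = α' ∧ k = k') ∧
      (∀ S : Set (Qt p n), S.Finite → (∀ a ∈ S, ∀ b, qleT p n b a → b ∈ S) →
        ∃ (α : Fin p → Fin n) (k : ℕ), StrictMono α ∧ phiSS p n α k = S) := by
  refine ⟨fun α k hα => ⟨finite_phiSS, isQtLowerSet_phiSS hα⟩,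
    fun α α' k k' hα hα' => phiSS_injective (by omega) hα hα', fun S hS hlower => ?_⟩
  obtain ⟨T, rfl⟩ := hS.exists_finset_coe
  exact exists_phiSS_eq hlower hpn

/-- The map `φ_ss` is a bijection from the set `Ĩ_ss` of pairs
`I^{(k)}` (with `I` a strictly increasing `p`-tuple in `[1,n]` and `k ∈ ℕ₀`) onto the
set `𝒥(Q̃)` of finite order ideals of `(Q̃,≺)`. -/
theorem statement11 (p n : ℕ) (hp : 1 ≤ p) (hpn : p < n) :
    (∀ (α : Fin p → Fin n) (k : ℕ), StrictMono α →
        (phiSS p n α k).Finite ∧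
          (∀ a ∈ phiSS p n α k, ∀ b, qleT p n b a → b ∈ phiSS p n α k)) ∧
      (∀ (α α' : Fin p → Fin n) (k k' : ℕ), StrictMono α → StrictMono α' →
        phiSS p n α k = phiSS p n α' k' → α = α' ∧ k = k') ∧
      (∀ S : Set (Qt p n), S.Finite → (∀ a ∈ S, ∀ b, qleT p n b a → b ∈ S) →
        ∃ (α : Fin p → Fin n) (k : ℕ), StrictMono α ∧ phiSS p n α k = S) :=
  statement11_general p n hpn
end
end

section
/- Fix integers 1 ≤ p < n. The map φ_pbw is an isomorphism of posets from (Ĩ_pbw, ≺_pbw) to the set 𝒥(Q̃) of finite order ideals of (Q̃,≺) ordered by inclusion. In particular, φ_pbw is a bijection from Ĩ_pbw to 𝒥(Q̃). -/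
open scoped Classical

noncomputable section

open MvPolynomial

/-- The index type of the variables `z_{i,j}^{(k)}`. -/
abbrev SVar (p n : ℕ) := Fin p × Fin n × ℕ

/-- The power series `D_I(t)`: the determinant of the `p×p` matrix whose `j`-th
column is the `α j`-th column of the matrix `Z(t)` of power series
`z_{i,j}(t) = Σ_k z_{i,j}^{(k)} t^k`. -/
def Dser (p n : ℕ) (α : Fin p → Fin n) :
    PowerSeries (MvPolynomial (SVar p n) ℂ) :=
  (Matrix.of fun i j : Fin p =>
    PowerSeries.mk fun k => (X (i, α j, k) : MvPolynomial (SVar p n) ℂ)).det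

/-- The coefficient `D_I^{(k)}` of `t^k` in `D_I(t)`. -/
def Dc (p n : ℕ) (α : Fin p → Fin n) (k : ℕ) : MvPolynomial (SVar p n) ℂ :=
  PowerSeries.coeff k (Dser p n α)

/-- The semi-infinite Plücker algebra `𝒫̃`: the subalgebra generated by all the
`D_I^{(k)}`. -/
def sPlue (p n : ℕ) : Subalgebra ℂ (MvPolynomial (SVar p n) ℂ) :=
  Algebra.adjoin ℂ {f | ∃ (α : Fin p → Fin n) (k : ℕ), f = Dc p n α k}

/-- The position of `z_{i,j}^{(k)}` in the lexicographic ordering of the variables: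
first by `k`, then by `i`, then by `j`. -/
def rankSS (p n : ℕ) (x : SVar p n) : ℕ :=
  x.2.2 * (p * n) + (x.1 : ℕ) * n + (x.2.1 : ℕ)
/-- Cyclic shift on `[1,n]` (0-indexed): `a ↦ a − k (mod n)`. -/
def shiftDown {n : ℕ} (k : ℕ) (a : Fin n) : Fin n :=
  ⟨((a : ℕ) + n - k % n) % n,
    Nat.mod_lt _ (Nat.lt_of_le_of_lt (Nat.zero_le _) a.isLt)⟩

/-- `I^{(k)} ∈ Ĩ_pbw`: the tuple `(α₁ − k mod n, …, α_p − k mod n)` is a PBW tuple. -/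
def IsPBWk (p n : ℕ) (α : Fin p → Fin n) (k : ℕ) : Prop :=
  IsPBW p n (fun i => shiftDown k (α i))

/-- The position of `z_{i,j}^{(k)}` in the `<_pbw` ordering of the variables: first
by `k`, then by `i`, and within fixed `k` and `i` cyclically starting with
`z_{i, kp+i mod n}^{(k)}`. -/
def rankPBWt (p n : ℕ) (x : SVar p n) : ℕ :=
  x.2.2 * (p * n) + (x.1 : ℕ) * n +
    ((x.2.1 : ℕ) + n - (x.2.2 * p + (x.1 : ℕ)) % n) % n
/-- The order ideal `φ_pbw(I^{(k)}) ⊆ Q̃`: the minimal order ideal containing all the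
elements `q_{k+i, k+(α_i−k mod n)}` with `i ∈ [1,p]` and `k + (α_i−k mod n) > p`. -/
def phiPBWt (p n : ℕ) (α : Fin p → Fin n) (k : ℕ) : Set (Qt p n) :=
  {q | ∃ i : Fin p, p ≤ k + (shiftDown k (α i) : ℕ) ∧
    qleN p n q.val (k + (i : ℕ) + 1, k + (shiftDown k (α i) : ℕ) + 1)}

/-- The order `⪯_pbw` on `Ĩ_pbw`: `I^{(k)} ⪯_pbw I'^{(k')}` iff `k ≤ k'` and for
every `i ∈ [k'−k+1, p]` there is `i' ∈ [i−(k'−k), p]` with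
`k + (α_i − k mod n) ≤ k' + (α'_{i'} − k' mod n)` (0-indexed form, where
`(b:ℕ)+k' ≥ (a:ℕ)+k` encodes `i' ≥ i − (k'−k)`). -/
def pbwLeT (p n : ℕ) (α : Fin p → Fin n) (k : ℕ) (α' : Fin p → Fin n) (k' : ℕ) :
    Prop :=
  k ≤ k' ∧ ∀ a : Fin p, k' ≤ k + (a : ℕ) →
    ∃ b : Fin p, (a : ℕ) + k ≤ (b : ℕ) + k' ∧
      k + (shiftDown k (α a) : ℕ) ≤ k' + (shiftDown k' (α' b) : ℕ)

/-!
Membership in `φ_pbw(I^{(k)})` has a closed form: writing `b i = α_i − k mod n`, the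
point `q_{x,y}` lies in it iff `x ≤ k`, or `y ≤ k + p`, or `x ≤ k + i` and `y ≤ k + b i` for
some `i`. With it, being a finite order ideal and the comparison of `⪯_pbw` with inclusion
are linear arithmetic. Injectivity follows from antisymmetry of `⪯_pbw`, because a PBW tuple
is determined by its suffix maxima. For surjectivity, let `k + p` be the top row of a finite
ideal: rows `≤ k` are full, and the maxima of the top `p` rows form an antitone staircase;
the PBW tuple records the heights `≥ p` at which the staircase drops, and fixed points
elsewhere.
-/

namespace PbwIdeals

variable {p n : ℕ}

structure IsPbwSeq (p n : ℕ) (b : Fin p → ℕ) : Prop where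
  lt : ∀ i, b i < n
  eq_of_lt : ∀ i, b i < p → b i = i
  lt_of_lt : ∀ i j, p ≤ b j → b j < b i → i < j
  injective : Function.Injective b

lemma IsPbwSeq.le {b : Fin p → ℕ} (hb : IsPbwSeq p n b) (i : Fin p) : (i : ℕ) ≤ b i := by
  by_cases h : b i < p
  · exact (hb.eq_of_lt i h).ge
  · omega

lemma IsPbwSeq.exists_last (hp : 1 ≤ p) {b : Fin p → ℕ} (hb : IsPbwSeq p n b) :
    ∃ L : Fin p, (L : ℕ) = p - 1 ∧ p - 1 ≤ b L :=
  ⟨⟨p - 1, by omega⟩, rfl, hb.le ⟨p - 1, by omega⟩⟩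

def pbwTuple (k : ℕ) (α : Fin p → Fin n) : Fin p → ℕ := fun i => shiftDown k (α i)

lemma isPBWk_iff {α : Fin p → Fin n} {k : ℕ} :
    IsPBWk p n α k ↔ IsPbwSeq p n (pbwTuple k α) := by
  refine ⟨fun ⟨hinj, hsmall, hdec⟩ => ⟨fun i => (shiftDown k (α i)).isLt, hsmall, hdec,
    fun i j h => hinj (Fin.ext h)⟩, fun hb => ⟨fun i j h => hb.injective (congrArg Fin.val h),
    hb.eq_of_lt, hb.lt_of_lt⟩⟩

lemma shiftDown_eq_sub [NeZero n] (k : ℕ) (a : Fin n) : shiftDown k a = a - Fin.ofNat n k := by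
  have := Nat.mod_lt k (Nat.pos_of_neZero n)
  ext
  rw [Fin.sub_def, Fin.val_ofNat]
  simp only [shiftDown]
  congr 1
  omega

lemma pbwTuple_injective [NeZero n] (k : ℕ) :
    Function.Injective (pbwTuple (p := p) (n := n) k) := by
  intro α α' h
  funext i
  have := congrFun h i
  simp only [pbwTuple, shiftDown_eq_sub] at this
  exact sub_left_injective (Fin.ext this)

lemma exists_pbwTuple_eq [NeZero n] (k : ℕ) {b : Fin p → ℕ} (hb : ∀ i, b i < n) :
    ∃ α : Fin p → Fin n, pbwTuple k α = b := by
  refine ⟨fun i => Fin.ofNat n (b i) + Fin.ofNat n k, funext fun i => ?_⟩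
  simp only [pbwTuple, shiftDown_eq_sub, add_sub_cancel_right, Fin.val_ofNat]
  exact Nat.mod_eq_of_lt (hb i)

def phiN (p n : ℕ) (b : Fin p → ℕ) (k : ℕ) : Set (Qt p n) :=
  {q | ∃ i : Fin p, p ≤ k + b i ∧ qleN p n q.val (k + i + 1, k + b i + 1)}

lemma phiPBWt_eq_phiN (α : Fin p → Fin n) (k : ℕ) :
    phiPBWt p n α k = phiN p n (pbwTuple k α) k := rfl

/-- The disjuncts `x ≤ k` and `y ≤ k + p` come from the last generator
`(k + p, k + b (p - 1) + 1)` via relations (ii) and (i); they absorb everything relation (iii)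
contributes. -/
lemma mem_phiN_iff (hp : 1 ≤ p) {b : Fin p → ℕ} (hb : IsPbwSeq p n b) {k : ℕ} (q : Qt p n) :
    q ∈ phiN p n b k ↔
      q.val.1 ≤ k ∨ q.val.2 ≤ k + p ∨
        ∃ i : Fin p, q.val.1 ≤ k + i + 1 ∧ q.val.2 ≤ k + b i + 1 := by
  obtain ⟨⟨x, y⟩, hq⟩ := q
  simp only [phiN, qleN, Set.mem_ofPred_eq] at hq ⊢
  obtain ⟨L, hL, hbL⟩ := hb.exists_last hp
  constructor
  · rintro ⟨i, -, (⟨hx, hy⟩ | hx | hy)⟩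
    · exact Or.inr (Or.inr ⟨i, hx, hy⟩)
    · omega
    · have := hb.lt i
      omega
  · rintro (hx | hy | ⟨i, hx, hy⟩)
    · exact ⟨L, by omega, Or.inr (Or.inl (by omega))⟩
    · exact ⟨L, by omega, Or.inl ⟨by omega, by omega⟩⟩
    · exact ⟨i, by omega, Or.inl ⟨hx, hy⟩⟩

def IsQIdeal (S : Set (Qt p n)) : Prop := ∀ a ∈ S, ∀ b, qleT p n b a → b ∈ S

lemma isQIdeal_phiN (hp : 1 ≤ p) {b : Fin p → ℕ} (hb : IsPbwSeq p n b) (k : ℕ) :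
    IsQIdeal (phiN p n b k) := by
  intro q hq q' hq'
  have hv := q.2
  have hv' := q'.2
  rw [mem_phiN_iff hp hb] at hq ⊢
  simp only [qleT, qleN] at hq'
  rcases hq with hx | hy | ⟨i, hx, hy⟩
  · omega
  · omega
  · have := hb.lt i
    have := i.isLt
    rcases hq' with ⟨hx', hy'⟩ | hx' | hy'
    · exact Or.inr (Or.inr ⟨i, by omega, by omega⟩)
    · omega
    · omega

lemma phiN_finite {b : Fin p → ℕ} (hb : IsPbwSeq p n b) (k : ℕ) : (phiN p n b k).Finite := by
  refine ((Set.finite_Icc (0, 0) (k + p, k + n)).preimage Subtype.val_injective.injOn).subset ?_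
  rintro ⟨⟨x, y⟩, hq⟩ ⟨i, -, hle⟩
  have := hb.lt i
  have := i.isLt
  simp only [qleN] at hle hq
  simp only [Set.mem_preimage, Set.mem_Icc, Prod.mk_le_mk]
  omega

def PbwLe (b : Fin p → ℕ) (k : ℕ) (b' : Fin p → ℕ) (k' : ℕ) : Prop :=
  k ≤ k' ∧
    ∀ a : Fin p, k' ≤ k + a → ∃ j : Fin p, a + k ≤ j + k' ∧ k + b a ≤ k' + b' j

section Order

variable (hp : 1 ≤ p) {b b' : Fin p → ℕ} (hb : IsPbwSeq p n b) (hb' : IsPbwSeq p n b')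
  {k k' : ℕ}
include hp hb hb'

lemma phiN_subset_of_pbwLe (h : PbwLe b k b' k') : phiN p n b k ⊆ phiN p n b' k' := by
  intro q hq
  rw [mem_phiN_iff hp hb] at hq
  rw [mem_phiN_iff hp hb']
  obtain ⟨hkk, hle⟩ := h
  rcases hq with hx | hy | ⟨i, hx, hy⟩
  · omega
  · omega
  · by_cases hi : k' ≤ k + i
    · obtain ⟨j, hj, hbj⟩ := hle i hi
      exact Or.inr (Or.inr ⟨j, by omega, by omega⟩)
    · omega

lemma pbwLe_of_phiN_subset (h : phiN p n b k ⊆ phiN p n b' k') : PbwLe b k b' k' := by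
  obtain ⟨L, hL, hbL⟩ := hb.exists_last hp
  obtain ⟨L', hL', hbL'⟩ := hb'.exists_last hp
  have hkk : k ≤ k' := by
    by_contra! hlt
    have := hb.lt L
    have hmem : (⟨(k + p, k + b L + 1), by omega⟩ : Qt p n) ∈ phiN p n b k :=
      (mem_phiN_iff hp hb _).2 (Or.inr (Or.inr ⟨L, by dsimp only; omega, le_rfl⟩))
    rcases (mem_phiN_iff hp hb' _).1 (h hmem) with hx | hy | ⟨j, hx, -⟩
    · dsimp only at hx; omega
    · dsimp only at hy; omega
    · have := j.isLt
      dsimp only at hx; omega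
  refine ⟨hkk, fun a ha => ?_⟩
  by_cases hgen : p ≤ k + b a
  · have := hb.lt a
    have := hb.le a
    have hmem : (⟨(k + a + 1, k + b a + 1), by omega⟩ : Qt p n) ∈ phiN p n b k :=
      (mem_phiN_iff hp hb _).2 (Or.inr (Or.inr ⟨a, le_rfl, le_rfl⟩))
    rcases (mem_phiN_iff hp hb' _).1 (h hmem) with hx | hy | ⟨j, hx, hy⟩
    · dsimp only at hx; omega
    · dsimp only at hy; exact ⟨L', by omega, by omega⟩
    · dsimp only at hx hy; exact ⟨j, by omega, by omega⟩
  · have hba := hb.eq_of_lt a (by omega)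
    have := a.isLt
    have hj := hb'.le ⟨a + k - k', by omega⟩
    exact ⟨⟨a + k - k', by omega⟩, by dsimp only; omega, by dsimp only at hj; omega⟩

lemma pbwLe_iff_phiN_subset : PbwLe b k b' k' ↔ phiN p n b k ⊆ phiN p n b' k' :=
  ⟨phiN_subset_of_pbwLe hp hb hb', pbwLe_of_phiN_subset hp hb hb'⟩

end Order

/-- The PBW tuple read off an antitone staircase `c`: position `t` records the height `c t`
when the staircase drops right after `t` at a height `≥ p`, and is a fixed point otherwise. -/
def ofStair (p : ℕ) (c : ℕ → ℕ) : Fin p → ℕ :=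
  fun t => if p ≤ c t ∧ c (t + 1) < c t then c t else t

section Staircase

variable {c : ℕ → ℕ}

lemma le_ofStair (t : Fin p) : (t : ℕ) ≤ ofStair p c t := by
  unfold ofStair
  split_ifs with h <;> omega

lemma isPbwSeq_ofStair (hpn : p < n) (hc : Antitone c) (hc0 : c 0 < n) :
    IsPbwSeq p n (ofStair p c) := by
  have hdrop : ∀ i j : ℕ, c (i + 1) < c i → i < j → c j < c i :=
    fun i j hi hij => (hc hij).trans_lt hi
  have hdrops : ∀ i j : ℕ, c (i + 1) < c i → c (j + 1) < c j → c j ≤ c i → i ≤ j := by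
    intro i j hi hj hji
    by_contra! hlt
    have := hdrop j i hj hlt
    omega
  refine ⟨fun i => ?_, fun i hi => ?_, fun i j hj hji => ?_, fun i j hij => ?_⟩
  · have := hc (Nat.zero_le i)
    unfold ofStair
    split_ifs <;> omega
  · unfold ofStair at hi ⊢
    split_ifs at hi ⊢ <;> omega
  · unfold ofStair at hj hji
    split_ifs at hj hji <;>
      first | omega | exact Fin.lt_def.2 (lt_of_le_of_ne (hdrops i j (by tauto) (by tauto) hji.le)
        fun h => by rw [h] at hji; exact lt_irrefl _ hji)
  · unfold ofStair at hij
    split_ifs at hij <;>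
      first | omega | exact Fin.ext (le_antisymm (hdrops i j (by tauto) (by tauto) hij.ge)
        (hdrops j i (by tauto) (by tauto) hij.le))

/-- Walking along the plateau of `c` through `t` until it drops, which it must do by
position `p` since `c p < p ≤ c t`. -/
lemma exists_ofStair_eq (hc : Antitone c) (hcp : c p < p) {t : ℕ}
    (hpt : p ≤ c t) : ∃ i : Fin p, t ≤ i ∧ ofStair p c i = c t := by
  have ht : t < p := by
    by_contra! h
    have := hc h
    omega
  suffices ∀ d t, t + 1 + d = p → p ≤ c t →
      ∃ i : Fin p, t ≤ i ∧ ofStair p c i = c t from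
    this (p - (t + 1)) t (by omega) hpt
  intro d
  induction d with
  | zero =>
    intro t htp hpt
    have hcp' : c (t + 1) < p := by rwa [show t + 1 = p by omega]
    exact ⟨⟨t, by omega⟩, le_rfl, if_pos ⟨hpt, hcp'.trans_le hpt⟩⟩
  | succ d ih =>
    intro t htp hpt
    by_cases hdrop : c (t + 1) < c t
    · exact ⟨⟨t, by omega⟩, le_rfl, if_pos ⟨hpt, hdrop⟩⟩
    · have hflat : c (t + 1) = c t := le_antisymm (hc (Nat.le_succ t)) (by omega)
      obtain ⟨i, hi, hci⟩ := ih (t + 1) (by omega) (by omega)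
      exact ⟨i, by omega, hci.trans hflat⟩

lemma exists_le_ofStair_iff (hc : Antitone c) (hcp : c p < p) {t : ℕ} (ht : t < p) (z : ℕ) :
    (∃ i : Fin p, t ≤ i ∧ z ≤ ofStair p c i) ↔ z ≤ c t ∨ z < p := by
  constructor
  · rintro ⟨i, hti, hz⟩
    have := hc hti
    unfold ofStair at hz
    split_ifs at hz <;> omega
  · intro hz
    by_cases hpz : p ≤ z
    · obtain ⟨i, hi, hci⟩ := exists_ofStair_eq hc hcp (hpz.trans (hz.resolve_right (by omega)))
      exact ⟨i, hi, hci ▸ hz.resolve_right (by omega)⟩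
    · have := le_ofStair (c := c) (⟨p - 1, by omega⟩ : Fin p)
      exact ⟨⟨p - 1, by omega⟩, by dsimp only; omega, by dsimp only at this; omega⟩

end Staircase

def sufMax (b : Fin p → ℕ) (d : ℕ) : ℕ :=
  (Finset.univ.filter fun s : Fin p => d ≤ s).sup b

section SufMax

variable {b b' : Fin p → ℕ}

lemma sufMax_le_sufMax (H : ∀ a : Fin p, ∃ j : Fin p, (a : ℕ) ≤ j ∧ b a ≤ b' j)
    (d : ℕ) :
    sufMax b d ≤ sufMax b' d := by
  refine Finset.sup_le fun s hs => ?_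
  obtain ⟨j, hsj, hbj⟩ := H s
  rw [Finset.mem_filter] at hs
  exact hbj.trans (Finset.le_sup (Finset.mem_filter.2 ⟨Finset.mem_univ j, hs.2.trans hsj⟩))

lemma sufMax_eq_max (a : Fin p) : sufMax b a = max (b a) (sufMax b (a + 1)) := by
  have : (Finset.univ.filter fun s : Fin p => (a : ℕ) ≤ s) =
      insert a (Finset.univ.filter fun s : Fin p => (a : ℕ) + 1 ≤ s) := by
    ext s
    simp only [Finset.mem_filter, Finset.mem_univ, true_and, Finset.mem_insert, Fin.ext_iff]
    omega
  rw [sufMax, this, Finset.sup_insert]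
  rfl

lemma IsPbwSeq.sufMax_succ_lt (hb : IsPbwSeq p n b) {a : Fin p} (ha : p ≤ b a) :
    sufMax b (a + 1) < b a := by
  refine (Finset.sup_lt_iff (show 0 < b a by have := a.isLt; omega)).2 fun s hs => ?_
  rw [Finset.mem_filter] at hs
  have hne : b s ≠ b a := fun h => by
    rw [hb.injective h] at hs; omega
  by_contra! hle
  have := hb.lt_of_lt s a ha (lt_of_le_of_ne hle hne.symm)
  rw [Fin.lt_def] at this
  omega

lemma IsPbwSeq.ofStair_sufMax (hb : IsPbwSeq p n b) : ofStair p (sufMax b) = b := by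
  funext a
  have hmax := sufMax_eq_max (b := b) a
  unfold ofStair
  by_cases ha : p ≤ b a
  · have := hb.sufMax_succ_lt ha
    rw [if_pos (by omega)]
    omega
  · rw [if_neg (by omega), hb.eq_of_lt a (by omega)]

end SufMax

lemma eq_of_pbwLe_of_pbwLe {b b' : Fin p → ℕ} (hb : IsPbwSeq p n b) (hb' : IsPbwSeq p n b')
    {k k' : ℕ} (h : PbwLe b k b' k') (h' : PbwLe b' k' b k) : b = b' ∧ k = k' := by
  obtain rfl : k = k' := le_antisymm h.1 h'.1
  have dominated : ∀ {b b' : Fin p → ℕ}, PbwLe b k b' k →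
      ∀ a : Fin p, ∃ j : Fin p, (a : ℕ) ≤ j ∧ b a ≤ b' j := fun h a => by
    obtain ⟨j, hj, hbj⟩ := h.2 a (by omega)
    exact ⟨j, by omega, by omega⟩
  have hsuf : sufMax b = sufMax b' := funext fun d =>
    le_antisymm (sufMax_le_sufMax (dominated h) d) (sufMax_le_sufMax (dominated h') d)
  exact ⟨by rw [← hb.ofStair_sufMax, hsuf, hb'.ofStair_sufMax], rfl⟩

section Profile

variable (T : Finset (Qt p n))

/-- `0` encodes an empty row: every point of `Q̃` has column `≥ p + 1`. -/
def rowMax (x : ℕ) : ℕ := T.sup fun q => if q.val.1 = x then q.val.2 else 0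

def topRow : ℕ := T.sup fun q => q.val.1

def stair (k t : ℕ) : ℕ := rowMax T (k + 1 + t) - (k + 1)

variable {T}

lemma le_rowMax {q : Qt p n} (hq : q ∈ T) : q.val.2 ≤ rowMax T q.val.1 := by
  have := Finset.le_sup (f := fun q' : Qt p n => if q'.val.1 = q.val.1 then q'.val.2 else 0) hq
  simpa [rowMax] using this

lemma exists_mem_rowMax {x : ℕ} (hx : rowMax T x ≠ 0) :
    ∃ q ∈ T, q.val = (x, rowMax T x) := by
  rcases T.eq_empty_or_nonempty with rfl | hne
  · exact absurd rfl hx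
  obtain ⟨q, hq, hsup⟩ :=
    Finset.exists_mem_eq_sup T hne fun q : Qt p n => if q.val.1 = x then q.val.2 else 0
  rw [rowMax, hsup] at hx ⊢
  split_ifs at hx ⊢ with h
  · exact ⟨q, hq, Prod.ext h rfl⟩
  · exact absurd rfl hx

lemma le_topRow {q : Qt p n} (hq : q ∈ T) : q.val.1 ≤ topRow T :=
  Finset.le_sup (f := fun q : Qt p n => q.val.1) hq

lemma exists_mem_topRow (h : topRow T ≠ 0) : ∃ q ∈ T, q.val.1 = topRow T := by
  rcases T.eq_empty_or_nonempty with rfl | hne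
  · exact absurd rfl h
  obtain ⟨q, hq, hsup⟩ := Finset.exists_mem_eq_sup T hne fun q : Qt p n => q.val.1
  exact ⟨q, hq, hsup.symm⟩

lemma stair_zero_lt (hn : 0 < n) (k : ℕ) : stair T k 0 < n := by
  by_cases h0 : rowMax T (k + 1 + 0) = 0
  · simp only [stair, h0]
    omega
  · obtain ⟨q₀, -, hval⟩ := exists_mem_rowMax h0
    have := q₀.2
    rw [hval] at this
    simp only [stair]
    omega

lemma stair_eq_zero : stair T (topRow T - p) p = 0 := by
  have hzero : rowMax T (topRow T - p + 1 + p) = 0 := by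
    by_contra h0
    obtain ⟨q₀, hq₀, hval⟩ := exists_mem_rowMax h0
    have := le_topRow hq₀
    rw [hval] at this
    dsimp only at this
    omega
  simp only [stair, hzero, Nat.zero_sub]

variable (hT : IsQIdeal (T : Set (Qt p n)))
include hT

lemma mem_iff_le_rowMax (q : Qt p n) : q ∈ T ↔ q.val.2 ≤ rowMax T q.val.1 := by
  refine ⟨le_rowMax, fun hq => ?_⟩
  have := q.2
  obtain ⟨q₀, hq₀, hval⟩ := exists_mem_rowMax (T := T) (x := q.val.1) (by omega)
  exact hT q₀ hq₀ q (by rw [qleT, hval]; exact Or.inl ⟨le_rfl, hq⟩)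

lemma mem_of_add_le_topRow {q : Qt p n} (hq : q.val.1 + p ≤ topRow T) : q ∈ T := by
  have := q.2
  obtain ⟨q₀, hq₀, hrow⟩ := exists_mem_topRow (T := T) (by omega)
  exact hT q₀ hq₀ q (Or.inr (Or.inl (by omega)))

lemma mem_of_snd_le_topRow {q : Qt p n} (hq : q.val.2 ≤ topRow T) : q ∈ T := by
  have := q.2
  obtain ⟨q₀, hq₀, hrow⟩ := exists_mem_topRow (T := T) (by omega)
  have := q₀.2
  exact hT q₀ hq₀ q (Or.inl ⟨by omega, by omega⟩)

/-- A full row `x + 1` would put `(x + p, x + p)` into the ideal by relation (iii). -/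
lemma rowMax_succ_le (hpn : p < n) {x : ℕ} (hx : 1 ≤ x) (hr : topRow T < x + p) :
    rowMax T (x + 1) ≤ rowMax T x := by
  by_cases h0 : rowMax T (x + 1) = 0
  · omega
  obtain ⟨q₀, hq₀, hval⟩ := exists_mem_rowMax h0
  have hv := q₀.2
  rw [hval] at hv
  dsimp only at hv
  have hnotfull : rowMax T (x + 1) + 1 < x + 1 + n := by
    by_contra! hfull
    have hdiag := le_topRow (hT q₀ hq₀ ⟨(x + p, x + p), by omega⟩
      (by rw [qleT, hval]; exact Or.inr (Or.inr (by dsimp only; omega))))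
    dsimp only at hdiag
    omega
  exact le_rowMax (hT q₀ hq₀ ⟨(x, rowMax T (x + 1)), by omega⟩
    (by rw [qleT, hval]; exact Or.inl ⟨by dsimp only; omega, le_rfl⟩))

lemma antitone_stair (hpn : p < n) : Antitone (stair T (topRow T - p)) :=
  antitone_nat_of_succ_le fun t =>
    Nat.sub_le_sub_right (rowMax_succ_le hT hpn (x := topRow T - p + 1 + t) (by omega) (by omega)) _

end Profile

theorem exists_phiN_eq (hp : 1 ≤ p) (hpn : p < n) {S : Set (Qt p n)} (hS : S.Finite)
    (hSid : IsQIdeal S) : ∃ b k, IsPbwSeq p n b ∧ phiN p n b k = S := by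
  lift S to Finset (Qt p n) using hS
  set k := topRow S - p
  set c := stair S k
  have hc : Antitone c := antitone_stair hSid hpn
  have hc0 : c 0 < n := stair_zero_lt (by omega) k
  have hcp : c p < p := by
    rw [show c p = 0 from stair_eq_zero]
    omega
  have hb := isPbwSeq_ofStair hpn hc hc0
  refine ⟨ofStair p c, k, hb, Set.ext fun q => ?_⟩
  have hq := q.2
  rw [mem_phiN_iff hp hb, Finset.mem_coe]
  by_cases hx : q.val.1 ≤ k
  · exact iff_of_true (Or.inl hx) (mem_of_add_le_topRow hSid (by omega))
  by_cases hy : q.val.2 ≤ k + p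
  · exact iff_of_true (Or.inr (Or.inl hy)) (mem_of_snd_le_topRow hSid (by omega))
  by_cases hxr : k + p < q.val.1
  · refine iff_of_false ?_ fun hqS => ?_
    · rintro (h | h | ⟨i, hi, -⟩)
      · omega
      · omega
      · have := i.isLt
        omega
    · have := le_topRow hqS
      omega
  have ht : q.val.1 - (k + 1) < p := by omega
  have hxt : k + 1 + (q.val.1 - (k + 1)) = q.val.1 := by omega
  rw [mem_iff_le_rowMax hSid, or_iff_right hx, or_iff_right hy]
  calc (∃ i : Fin p, q.val.1 ≤ k + i + 1 ∧ q.val.2 ≤ k + ofStair p c i + 1)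
      ↔ ∃ i : Fin p, q.val.1 - (k + 1) ≤ i ∧ q.val.2 - (k + 1) ≤ ofStair p c i :=
        exists_congr fun i => by omega
    _ ↔ q.val.2 - (k + 1) ≤ c (q.val.1 - (k + 1)) ∨ q.val.2 - (k + 1) < p :=
        exists_le_ofStair_iff hc hcp ht _
    _ ↔ q.val.2 ≤ rowMax S q.val.1 := by
        simp only [c, stair, hxt]
        omega

end PbwIdeals

open PbwIdeals

/-- The map `φ_pbw` is an isomorphism of posets from
`(Ĩ_pbw, ⪯_pbw)` onto the set `𝒥(Q̃)` of finite order ideals of `(Q̃,≺)` ordered by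
inclusion; in particular it is a bijection from `Ĩ_pbw` onto `𝒥(Q̃)`. -/
theorem statement18 (p n : ℕ) (hp : 1 ≤ p) (hpn : p < n) :
    (∀ (α : Fin p → Fin n) (k : ℕ), IsPBWk p n α k →
        (phiPBWt p n α k).Finite ∧
          (∀ a ∈ phiPBWt p n α k, ∀ b, qleT p n b a → b ∈ phiPBWt p n α k)) ∧
      (∀ (α α' : Fin p → Fin n) (k k' : ℕ), IsPBWk p n α k → IsPBWk p n α' k' →
        phiPBWt p n α k = phiPBWt p n α' k' → α = α' ∧ k = k') ∧
      (∀ S : Set (Qt p n), S.Finite → (∀ a ∈ S, ∀ b, qleT p n b a → b ∈ S) →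
        ∃ (α : Fin p → Fin n) (k : ℕ), IsPBWk p n α k ∧ phiPBWt p n α k = S) ∧
      (∀ (α α' : Fin p → Fin n) (k k' : ℕ), IsPBWk p n α k → IsPBWk p n α' k' →
        (pbwLeT p n α k α' k' ↔ phiPBWt p n α k ⊆ phiPBWt p n α' k')) := by
  have : NeZero n := ⟨by omega⟩
  refine ⟨fun α k hα => ?_, fun α α' k k' hα hα' heq => ?_, fun S hS hSid => ?_,
    fun α α' k k' hα hα' => ?_⟩
  · rw [isPBWk_iff] at hα
    exact ⟨phiN_finite hα k, isQIdeal_phiN hp hα k⟩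
  · rw [isPBWk_iff] at hα hα'
    rw [phiPBWt_eq_phiN, phiPBWt_eq_phiN] at heq
    obtain ⟨hb, rfl⟩ := eq_of_pbwLe_of_pbwLe hα hα'
      (pbwLe_of_phiN_subset hp hα hα' heq.subset) (pbwLe_of_phiN_subset hp hα' hα heq.superset)
    exact ⟨pbwTuple_injective k hb, rfl⟩
  · obtain ⟨b, k, hb, hbS⟩ := exists_phiN_eq hp hpn hS hSid
    obtain ⟨α, rfl⟩ := exists_pbwTuple_eq k hb.lt
    exact ⟨α, k, isPBWk_iff.2 hb, hbS⟩
  · rw [isPBWk_iff] at hα hα'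
    exact pbwLe_iff_phiN_subset hp hα hα'
end
end
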